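/- arXiv:2511.14239 — 12 statements merged into one kernel-verified Lean document; each statement's English description precedes it below -/
import Mathlib

section
/- If T1 and T2 are q-commuting contractions on a Hilbert space H and T = T1T2, then for every h ∈ H, ‖D_{T1} T2 h‖² + ‖D_{T2} h‖² = ‖D_T h‖². In particular the map Λ sending D_T h to (D_{T1} T2 h, D_{T2} h) extends to an isometry from the closure of the range of D_T into D_{T1}-defect space ⊕ D_{T2}-defect space. -/
/-! The defect identities give `‖D_S x‖² = ‖x‖² - ‖S x‖²` for `S = T1, T2, T1 T2`, and the three
differences telescope: `(‖T2 h‖² - ‖T1 T2 h‖²) + (‖h‖² - ‖T2 h‖²) = ‖h‖² - ‖T1 T2 h‖²`. So `Λ` is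
isometric on the range of `D_T`, hence well defined there, and extends by continuity to its closure. -/

open ContinuousLinearMap

theorem IsSelfAdjoint.norm_apply_sq_eq_sub_of_mul_self_eq
    {𝕜 E F : Type*} [RCLike 𝕜] [NormedAddCommGroup E] [InnerProductSpace 𝕜 E] [CompleteSpace E]
    [NormedAddCommGroup F] [InnerProductSpace 𝕜 F] [CompleteSpace F]
    {P : E →L[𝕜] E} {S : E →L[𝕜] F} (hP : IsSelfAdjoint P) (hsq : P * P = 1 - adjoint S ∘L S)
    (x : E) : ‖P x‖ ^ 2 = ‖x‖ ^ 2 - ‖S x‖ ^ 2 := by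
  rw [apply_norm_sq_eq_inner_adjoint_left, apply_norm_sq_eq_inner_adjoint_left S, hP.adjoint_eq,
    ← mul_def, hsq, ← @inner_self_eq_norm_sq 𝕜]
  simp [inner_sub_left]

theorem norm_sq_defect_apply_add_norm_sq_defect
    {𝕜 E F G : Type*} [RCLike 𝕜] [NormedAddCommGroup E] [InnerProductSpace 𝕜 E] [CompleteSpace E]
    [NormedAddCommGroup F] [InnerProductSpace 𝕜 F] [CompleteSpace F]
    [NormedAddCommGroup G] [InnerProductSpace 𝕜 G] [CompleteSpace G]
    {S₁ : F →L[𝕜] G} {S₂ : E →L[𝕜] F} {D₁ : F →L[𝕜] F} {D₂ D : E →L[𝕜] E}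
    (hD₁ : IsSelfAdjoint D₁) (hD₂ : IsSelfAdjoint D₂) (hD : IsSelfAdjoint D)
    (hD₁sq : D₁ * D₁ = 1 - adjoint S₁ ∘L S₁) (hD₂sq : D₂ * D₂ = 1 - adjoint S₂ ∘L S₂)
    (hDsq : D * D = 1 - adjoint (S₁ ∘L S₂) ∘L (S₁ ∘L S₂)) (x : E) :
    ‖D₁ (S₂ x)‖ ^ 2 + ‖D₂ x‖ ^ 2 = ‖D x‖ ^ 2 := by
  rw [hD₁.norm_apply_sq_eq_sub_of_mul_self_eq hD₁sq, hD₂.norm_apply_sq_eq_sub_of_mul_self_eq hD₂sq,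
    hD.norm_apply_sq_eq_sub_of_mul_self_eq hDsq, comp_apply]
  ring

theorem LinearMap.exists_linearIsometry_closure_range_of_norm_eq
    {𝕜 E F G : Type*} [NormedField 𝕜] [AddCommGroup E] [Module 𝕜 E]
    [NormedAddCommGroup F] [NormedSpace 𝕜 F] [NormedAddCommGroup G] [NormedSpace 𝕜 G]
    [CompleteSpace G] (A : E →ₗ[𝕜] F) (B : E →ₗ[𝕜] G) (hAB : ∀ x, ‖B x‖ = ‖A x‖) :
    ∃ Λ : (LinearMap.range A).topologicalClosure →ₗᵢ[𝕜] G,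
      ∀ (x : E) (y : (LinearMap.range A).topologicalClosure), (y : F) = A x → Λ y = B x := by
  let e : E →ₗ[𝕜] (LinearMap.range A).topologicalClosure :=
    Submodule.inclusion (Submodule.le_topologicalClosure _) ∘ₗ A.rangeRestrict
  have he : ∀ x, (e x : F) = A x := fun _ => rfl
  have h_dense : DenseRange e := by
    refine Subtype.dense_iff.2 fun y hy => ?_
    have hrange : Subtype.val '' Set.range e = Set.range A := by
      rw [← Set.range_comp]
      exact congrArg Set.range (funext he)
    rwa [Submodule.topologicalClosure_coe, LinearMap.coe_range, ← hrange] at hy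
  have h_bound : ∃ C, ∀ x, ‖B x‖ ≤ C * ‖e x‖ := ⟨1, fun x => by simp [hAB, he]⟩
  have h_eq : ∀ x, B.extendOfNorm e (e x) = B x := LinearMap.extendOfNorm_eq h_dense h_bound
  refine ⟨⟨B.extendOfNorm e, fun y => ?_⟩, fun x y hy => ?_⟩
  · refine h_dense.induction ?_ (isClosed_eq (by fun_prop) continuous_norm) y
    rintro _ ⟨x, rfl⟩
    change ‖B.extendOfNorm e (e x)‖ = _
    rw [h_eq, hAB, ← he]
    rfl
  · obtain rfl : y = e x := Subtype.ext hy
    exact h_eq x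

theorem defect_lambda_isometry_general
    {H : Type*} [NormedAddCommGroup H] [InnerProductSpace ℂ H] [CompleteSpace H]
    (T1 T2 : H →L[ℂ] H)
    (DT DT1 DT2 : H →L[ℂ] H)
    (hDT : DT.IsPositive) (hDT1 : DT1.IsPositive) (hDT2 : DT2.IsPositive)
    (hDTsq : DT * DT = 1 - adjoint (T1 * T2) * (T1 * T2))
    (hDT1sq : DT1 * DT1 = 1 - adjoint T1 * T1)
    (hDT2sq : DT2 * DT2 = 1 - adjoint T2 * T2) :
    (∀ h : H, ‖DT1 (T2 h)‖ ^ 2 + ‖DT2 h‖ ^ 2 = ‖DT h‖ ^ 2) ∧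
    ∃ Λ : (LinearMap.range (DT : H →ₗ[ℂ] H)).topologicalClosure →ₗᵢ[ℂ] WithLp 2 (H × H),
      ∀ (h : H) (x : (LinearMap.range (DT : H →ₗ[ℂ] H)).topologicalClosure),
        (x : H) = DT h →
        Λ x = (WithLp.equiv 2 (H × H)).symm (DT1 (T2 h), DT2 h) := by
  have hnorm : ∀ h : H, ‖DT1 (T2 h)‖ ^ 2 + ‖DT2 h‖ ^ 2 = ‖DT h‖ ^ 2 :=
    norm_sq_defect_apply_add_norm_sq_defect hDT1.isSelfAdjoint hDT2.isSelfAdjoint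
      hDT.isSelfAdjoint hDT1sq hDT2sq hDTsq
  let Λ₀ : H →ₗ[ℂ] WithLp 2 (H × H) :=
    (WithLp.linearEquiv 2 ℂ (H × H)).symm.toLinearMap ∘ₗ
      LinearMap.prod (DT1 ∘L T2 : H →L[ℂ] H) (DT2 : H →ₗ[ℂ] H)
  refine ⟨hnorm, (DT : H →ₗ[ℂ] H).exists_linearIsometry_closure_range_of_norm_eq Λ₀ fun h => ?_⟩
  rw [← sq_eq_sq₀ (norm_nonneg _) (norm_nonneg _), WithLp.prod_norm_sq_eq_of_L2]
  exact hnorm h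

/-- For `q`-commuting contractions `T1, T2` with `T = T1 T2`:
`‖D_{T1} T2 h‖² + ‖D_{T2} h‖² = ‖D_T h‖²` for every `h`, and the map
`Λ : D_T h ↦ (D_{T1} T2 h, D_{T2} h)` extends to a (linear) isometry from the closure of
the range of `D_T` into `D_{T1}`-space ⊕ `D_{T2}`-space (the ℓ²-direct sum `H ⊕₂ H`). -/
theorem defect_lambda_isometry
    {H : Type*} [NormedAddCommGroup H] [InnerProductSpace ℂ H] [CompleteSpace H]
    (q : ℂ) (hq : ‖q‖ = 1)
    (T1 T2 : H →L[ℂ] H) (hT1 : ‖T1‖ ≤ 1) (hT2 : ‖T2‖ ≤ 1)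
    (hcomm : T1 * T2 = q • (T2 * T1))
    (DT DT1 DT2 : H →L[ℂ] H)
    (hDT : DT.IsPositive) (hDT1 : DT1.IsPositive) (hDT2 : DT2.IsPositive)
    (hDTsq : DT * DT = 1 - adjoint (T1 * T2) * (T1 * T2))
    (hDT1sq : DT1 * DT1 = 1 - adjoint T1 * T1)
    (hDT2sq : DT2 * DT2 = 1 - adjoint T2 * T2) :
    (∀ h : H, ‖DT1 (T2 h)‖ ^ 2 + ‖DT2 h‖ ^ 2 = ‖DT h‖ ^ 2) ∧
    ∃ Λ : (LinearMap.range (DT : H →ₗ[ℂ] H)).topologicalClosure →ₗᵢ[ℂ] WithLp 2 (H × H),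
      ∀ (h : H) (x : (LinearMap.range (DT : H →ₗ[ℂ] H)).topologicalClosure),
        (x : H) = DT h →
        Λ x = (WithLp.equiv 2 (H × H)).symm (DT1 (T2 h), DT2 h) :=
  defect_lambda_isometry_general T1 T2 DT DT1 DT2 hDT hDT1 hDT2 hDTsq hDT1sq hDT2sq
end

section
/- If T1 and T2 are q-commuting contractions on H and T = T1T2, then for every h ∈ H, ‖D_{T1} T2 h‖² + ‖D_{T2} h‖² = ‖D_{T1} h‖² + ‖D_{T2} T1 h‖². Consequently, the map (D_{T1} T2 h, D_{T2} h) ↦ (D_{T1} h, D_{T2} T1 h) extends to an isometry on the relevant closed subspaces. -/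
open ContinuousLinearMap

/-! Since `D_S² = 1 - S*S`, one has `‖D_S x‖² = ‖x‖² - ‖S x‖²`. Substituting this into the four
defect terms, the identity reduces to `‖T1 T2 h‖ = ‖T2 T1 h‖`, which holds because
`T1 T2 = q T2 T1` with `|q| = 1`. The identity says that `L h := (D_{T1} T2 h, D_{T2} h)` and
`M h := (D_{T1} h, D_{T2} T1 h)` have the same norm for every `h`, so `L h ↦ M h` is a well-defined
isometry on the range of `L`, and it extends by continuity to the closure since `H ⊕₂ H` is
complete. -/

theorem ContinuousLinearMap.norm_sq_apply_of_mul_self_eq_one_sub_adjoint_mul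
    {𝕜 E : Type*} [RCLike 𝕜] [NormedAddCommGroup E] [InnerProductSpace 𝕜 E] [CompleteSpace E]
    {S D : E →L[𝕜] E} (hD : IsSelfAdjoint D) (hDsq : D * D = 1 - adjoint S * S) (x : E) :
    ‖D x‖ ^ 2 = ‖x‖ ^ 2 - ‖S x‖ ^ 2 := by
  rw [apply_norm_sq_eq_inner_adjoint_left D x, apply_norm_sq_eq_inner_adjoint_left S x,
    hD.adjoint_eq, ← inner_self_eq_norm_sq (𝕜 := 𝕜)]
  change RCLike.re (inner 𝕜 ((D * D) x) x) = _
  rw [hDsq]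
  simp [inner_sub_left]

theorem ContinuousLinearMap.norm_apply_apply_comm_of_mul_eq_smul_mul
    {𝕜 E : Type*} [NormedField 𝕜] [SeminormedAddCommGroup E] [NormedSpace 𝕜 E]
    {T1 T2 : E →L[𝕜] E} {q : 𝕜} (hq : ‖q‖ = 1) (hcomm : T1 * T2 = q • (T2 * T1)) (x : E) :
    ‖T1 (T2 x)‖ = ‖T2 (T1 x)‖ := by
  change ‖(T1 * T2) x‖ = _
  rw [hcomm, smul_apply, norm_smul, hq, one_mul]
  rfl

theorem LinearMap.denseRange_codRestrict_topologicalClosure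
    {R E F : Type*} [Semiring R] [AddCommMonoid E] [Module R E] [AddCommMonoid F] [Module R F]
    [TopologicalSpace F] [ContinuousAdd F] [ContinuousConstSMul R F] (L : E →ₗ[R] F) :
    DenseRange (L.codRestrict (LinearMap.range L).topologicalClosure
      fun x => (LinearMap.range L).le_topologicalClosure (LinearMap.mem_range_self L x)) := by
  rw [DenseRange, Subtype.dense_iff, ← Set.range_comp]
  exact (Submodule.topologicalClosure_coe _).ge

theorem LinearMap.exists_linearIsometry_topologicalClosure_range_of_norm_eq
    {𝕜 E F G : Type*} [NormedField 𝕜] [AddCommGroup E] [Module 𝕜 E]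
    [NormedAddCommGroup F] [NormedSpace 𝕜 F] [NormedAddCommGroup G] [NormedSpace 𝕜 G]
    [CompleteSpace G] (L : E →ₗ[𝕜] F) (M : E →ₗ[𝕜] G) (hLM : ∀ x, ‖M x‖ = ‖L x‖) :
    ∃ Φ : (LinearMap.range L).topologicalClosure →ₗᵢ[𝕜] G,
      ∀ (x : E) (y : (LinearMap.range L).topologicalClosure), (y : F) = L x → Φ y = M x := by
  set L' := L.codRestrict (LinearMap.range L).topologicalClosure
    fun x => (LinearMap.range L).le_topologicalClosure (LinearMap.mem_range_self L x)
  have hdense := L.denseRange_codRestrict_topologicalClosure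
  have hbound : ∃ C, ∀ x, ‖M x‖ ≤ C * ‖L' x‖ := ⟨1, fun x => by simp [L', hLM]⟩
  set Φ := M.extendOfNorm L'
  have hΦ (x : E) : Φ (L' x) = M x := extendOfNorm_eq hdense hbound x
  have hnorm (y) : ‖Φ y‖ = ‖y‖ :=
    hdense.induction_on y (isClosed_eq (continuous_norm.comp Φ.continuous) continuous_norm)
      fun x => by rw [hΦ, hLM]; rfl
  refine ⟨⟨Φ.toLinearMap, hnorm⟩, fun x y hy => ?_⟩
  obtain rfl : y = L' x := Subtype.ext hy
  exact hΦ x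

theorem defect_U_isometry_general
    {H : Type*} [NormedAddCommGroup H] [InnerProductSpace ℂ H] [CompleteSpace H]
    (q : ℂ) (hq : ‖q‖ = 1)
    (T1 T2 : H →L[ℂ] H)
    (hcomm : T1 * T2 = q • (T2 * T1))
    (DT1 DT2 : H →L[ℂ] H)
    (hDT1 : DT1.IsPositive) (hDT2 : DT2.IsPositive)
    (hDT1sq : DT1 * DT1 = 1 - adjoint T1 * T1)
    (hDT2sq : DT2 * DT2 = 1 - adjoint T2 * T2) :
    (∀ h : H, ‖DT1 (T2 h)‖ ^ 2 + ‖DT2 h‖ ^ 2 = ‖DT1 h‖ ^ 2 + ‖DT2 (T1 h)‖ ^ 2) ∧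
    ∀ L : H →ₗ[ℂ] WithLp 2 (H × H),
      (∀ h : H, L h = (WithLp.equiv 2 (H × H)).symm (DT1 (T2 h), DT2 h)) →
      ∃ Φ : (LinearMap.range L).topologicalClosure →ₗᵢ[ℂ] WithLp 2 (H × H),
        ∀ (h : H) (x : (LinearMap.range L).topologicalClosure),
          (x : WithLp 2 (H × H)) = L h →
          Φ x = (WithLp.equiv 2 (H × H)).symm (DT1 h, DT2 (T1 h)) := by
  have hD1 := norm_sq_apply_of_mul_self_eq_one_sub_adjoint_mul hDT1.isSelfAdjoint hDT1sq
  have hD2 := norm_sq_apply_of_mul_self_eq_one_sub_adjoint_mul hDT2.isSelfAdjoint hDT2sq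
  have key (h : H) :
      ‖DT1 (T2 h)‖ ^ 2 + ‖DT2 h‖ ^ 2 = ‖DT1 h‖ ^ 2 + ‖DT2 (T1 h)‖ ^ 2 := by
    rw [hD1, hD2, hD1, hD2, norm_apply_apply_comm_of_mul_eq_smul_mul hq hcomm]
    ring
  refine ⟨key, fun L hL => ?_⟩
  let M : H →ₗ[ℂ] WithLp 2 (H × H) :=
    (WithLp.linearEquiv 2 ℂ (H × H)).symm.toLinearMap ∘ₗ
      (DT1.toLinearMap.prod (DT2 ∘L T1).toLinearMap)
  have hLM (h : H) : ‖M h‖ = ‖L h‖ := by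
    refine (sq_eq_sq₀ (norm_nonneg _) (norm_nonneg _)).mp ?_
    rw [hL, WithLp.prod_norm_sq_eq_of_L2, WithLp.prod_norm_sq_eq_of_L2]
    exact (key h).symm
  exact L.exists_linearIsometry_topologicalClosure_range_of_norm_eq M hLM

/-- For `q`-commuting contractions `T1, T2` with `T = T1 T2`:
`‖D_{T1} T2 h‖² + ‖D_{T2} h‖² = ‖D_{T1} h‖² + ‖D_{T2} T1 h‖²` for every `h`, and
consequently the map `(D_{T1} T2 h, D_{T2} h) ↦ (D_{T1} h, D_{T2} T1 h)` extends to an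
isometry from the closure of the range of `h ↦ (D_{T1} T2 h, D_{T2} h)` (inside the
ℓ²-direct sum `H ⊕₂ H`). -/
theorem defect_U_isometry
    {H : Type*} [NormedAddCommGroup H] [InnerProductSpace ℂ H] [CompleteSpace H]
    (q : ℂ) (hq : ‖q‖ = 1)
    (T1 T2 : H →L[ℂ] H) (hT1 : ‖T1‖ ≤ 1) (hT2 : ‖T2‖ ≤ 1)
    (hcomm : T1 * T2 = q • (T2 * T1))
    (DT1 DT2 : H →L[ℂ] H)
    (hDT1 : DT1.IsPositive) (hDT2 : DT2.IsPositive)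
    (hDT1sq : DT1 * DT1 = 1 - adjoint T1 * T1)
    (hDT2sq : DT2 * DT2 = 1 - adjoint T2 * T2) :
    (∀ h : H, ‖DT1 (T2 h)‖ ^ 2 + ‖DT2 h‖ ^ 2 = ‖DT1 h‖ ^ 2 + ‖DT2 (T1 h)‖ ^ 2) ∧
    ∀ L : H →ₗ[ℂ] WithLp 2 (H × H),
      (∀ h : H, L h = (WithLp.equiv 2 (H × H)).symm (DT1 (T2 h), DT2 h)) →
      ∃ Φ : (LinearMap.range L).topologicalClosure →ₗᵢ[ℂ] WithLp 2 (H × H),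
        ∀ (h : H) (x : (LinearMap.range L).topologicalClosure),
          (x : WithLp 2 (H × H)) = L h →
          Φ x = (WithLp.equiv 2 (H × H)).symm (DT1 h, DT2 (T1 h)) :=
  defect_U_isometry_general q hq T1 T2 hcomm DT1 DT2 hDT1 hDT2 hDT1sq hDT2sq
end

section
/- Let T1, T2 be q-commuting contractions with product T = T1T2. If T is an isometry, then both T1 and T2 are isometries. -/
open ContinuousLinearMap

/-! A contraction can only shrink norms, so if `A ∘ B` preserves norms with `A`, `B`
contractions, then `B` preserves norms already. Since `|q| = 1`, the operators `T₁T₂` and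
`T₂T₁ = q⁻¹ T₁T₂` preserve norms together, and applying this to both orders gives the claim. -/

namespace ContinuousLinearMap

theorem norm_map_of_norm_map_comp {𝕜 E F G : Type*} [NontriviallyNormedField 𝕜]
    [SeminormedAddCommGroup E] [SeminormedAddCommGroup F] [SeminormedAddCommGroup G]
    [NormedSpace 𝕜 E] [NormedSpace 𝕜 F] [NormedSpace 𝕜 G]
    {A : F →L[𝕜] G} {B : E →L[𝕜] F} (hA : ‖A‖ ≤ 1) (hB : ‖B‖ ≤ 1)
    (hAB : ∀ x, ‖A (B x)‖ = ‖x‖) (x : E) : ‖B x‖ = ‖x‖ := by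
  refine le_antisymm ?_ ?_
  · simpa using B.le_of_opNorm_le hB x
  · simpa [hAB] using A.le_of_opNorm_le hA (B x)

theorem norm_map_mul_comm_of_q_commute {𝕜 E : Type*} [NormedField 𝕜]
    [SeminormedAddCommGroup E] [NormedSpace 𝕜 E] {q : 𝕜} (hq : ‖q‖ = 1)
    {S T : E →L[𝕜] E} (hcomm : S * T = q • (T * S)) (x : E) :
    ‖S (T x)‖ = ‖T (S x)‖ := by
  simpa [norm_smul, hq] using congr_arg (‖· x‖) hcomm

end ContinuousLinearMap

/-- If `T1, T2` are `q`-commuting contractions whose product `T = T1 T2` is an isometry,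
then both `T1` and `T2` are isometries. -/
theorem isometry_of_product_isometry
    {H : Type*} [NormedAddCommGroup H] [InnerProductSpace ℂ H] [CompleteSpace H]
    (q : ℂ) (hq : ‖q‖ = 1)
    (T1 T2 : H →L[ℂ] H) (hT1 : ‖T1‖ ≤ 1) (hT2 : ‖T2‖ ≤ 1)
    (hcomm : T1 * T2 = q • (T2 * T1))
    (hiso : adjoint (T1 * T2) * (T1 * T2) = 1) :
    adjoint T1 * T1 = 1 ∧ adjoint T2 * T2 = 1 := by
  have h12 : ∀ x, ‖T1 (T2 x)‖ = ‖x‖ := (norm_map_iff_adjoint_comp_self (T1 * T2)).mpr hiso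
  have h21 : ∀ x, ‖T2 (T1 x)‖ = ‖x‖ := fun x ↦
    (norm_map_mul_comm_of_q_commute hq hcomm x).symm.trans (h12 x)
  exact ⟨(norm_map_iff_adjoint_comp_self T1).mp (norm_map_of_norm_map_comp hT2 hT1 h21),
    (norm_map_iff_adjoint_comp_self T2).mp (norm_map_of_norm_map_comp hT1 hT2 h12)⟩
end

section
/- Let T1, T2 be q-commuting contractions with product T = T1T2. If T is unitary, then both T1 and T2 are unitary. -/
open ContinuousLinearMap

/-!
The right factor `T2` of the unitary `U = T1 T2` is an isometry, since
`‖x‖ = ‖T1 T2 x‖ ≤ ‖T2 x‖ ≤ ‖x‖`. The `q`-commutation gives the right inverse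
`T2 (q T1 U⋆) = U U⋆ = 1`, so the isometry `T2` is unitary; then `T1 = U T2⋆` is unitary as well.
-/

theorem ContinuousLinearMap.isometry_of_isometry_comp {𝕜 E F G : Type*}
    [NontriviallyNormedField 𝕜] [SeminormedAddCommGroup E] [SeminormedAddCommGroup F]
    [SeminormedAddCommGroup G] [NormedSpace 𝕜 E] [NormedSpace 𝕜 F] [NormedSpace 𝕜 G]
    {f : F →L[𝕜] G} {g : E →L[𝕜] F} (hf : ‖f‖ ≤ 1) (hg : ‖g‖ ≤ 1) (hfg : Isometry (f ∘L g)) :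
    Isometry g := by
  rw [AddMonoidHomClass.isometry_iff_norm] at hfg ⊢
  intro x
  refine le_antisymm (g.le_of_opNorm_le hg x |>.trans_eq (one_mul _)) ?_
  calc ‖x‖ = ‖f (g x)‖ := (hfg x).symm
    _ ≤ ‖g x‖ := f.le_of_opNorm_le hf (g x) |>.trans_eq (one_mul _)

theorem mul_smul_mul_eq_one_of_mul_eq_smul_mul {R A : Type*} [Monoid A] [SMul R A]
    [IsScalarTower R A A] [SMulCommClass R A A] {q : R} {a b c : A}
    (hab : a * b = q • (b * a)) (hc : a * b * c = 1) : b * (q • (a * c)) = 1 := by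
  rw [mul_smul_comm, ← mul_assoc, ← smul_mul_assoc, ← hab, hc]

namespace Unitary

variable {R : Type*} [Monoid R] [StarMul R]

theorem mem_of_star_mul_self_of_mul_eq_one {b c : R} (hb : star b * b = 1) (hc : b * c = 1) :
    b ∈ unitary R := by
  have hstar : star b = c := left_inv_eq_right_inv hb hc
  exact ⟨hb, hstar ▸ hc⟩

theorem mem_of_mul_mem_of_mem_right {a b : R} (hab : a * b ∈ unitary R) (hb : b ∈ unitary R) :
    a ∈ unitary R := by
  have ha : a = a * b * star b := by rw [mul_assoc, mul_star_self_of_mem hb, mul_one]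
  exact ha ▸ mul_mem hab (star_mem hb)

end Unitary

theorem unitary_of_product_unitary_general
    {H : Type*} [NormedAddCommGroup H] [InnerProductSpace ℂ H] [CompleteSpace H]
    (q : ℂ)
    (T1 T2 : H →L[ℂ] H) (hT1 : ‖T1‖ ≤ 1) (hT2 : ‖T2‖ ≤ 1)
    (hcomm : T1 * T2 = q • (T2 * T1))
    (hU1 : adjoint (T1 * T2) * (T1 * T2) = 1)
    (hU2 : (T1 * T2) * adjoint (T1 * T2) = 1) :
    (adjoint T1 * T1 = 1 ∧ T1 * adjoint T1 = 1) ∧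
    (adjoint T2 * T2 = 1 ∧ T2 * adjoint T2 = 1) := by
  simp only [← star_eq_adjoint] at hU1 hU2 ⊢
  have hU : T1 * T2 ∈ unitary (H →L[ℂ] H) := ⟨hU1, hU2⟩
  have hT2_isometry : star T2 * T2 = 1 := (isometry_iff_adjoint_comp_self T2).mp <|
    isometry_of_isometry_comp hT1 hT2 <| (isometry_iff_adjoint_comp_self _).mpr hU1
  have hT2_unitary : T2 ∈ unitary (H →L[ℂ] H) :=
    Unitary.mem_of_star_mul_self_of_mul_eq_one hT2_isometry
      (mul_smul_mul_eq_one_of_mul_eq_smul_mul hcomm hU2)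
  exact ⟨Unitary.mem_of_mul_mem_of_mem_right hU hT2_unitary, hT2_unitary⟩

/-- If `T1, T2` are `q`-commuting contractions whose product `T = T1 T2` is unitary,
then both `T1` and `T2` are unitary. -/
theorem unitary_of_product_unitary
    {H : Type*} [NormedAddCommGroup H] [InnerProductSpace ℂ H] [CompleteSpace H]
    (q : ℂ) (hq : ‖q‖ = 1)
    (T1 T2 : H →L[ℂ] H) (hT1 : ‖T1‖ ≤ 1) (hT2 : ‖T2‖ ≤ 1)
    (hcomm : T1 * T2 = q • (T2 * T1))
    (hU1 : adjoint (T1 * T2) * (T1 * T2) = 1)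
    (hU2 : (T1 * T2) * adjoint (T1 * T2) = 1) :
    (adjoint T1 * T1 = 1 ∧ T1 * adjoint T1 = 1) ∧
    (adjoint T2 * T2 = 1 ∧ T2 * adjoint T2 = 1) :=
  unitary_of_product_unitary_general q T1 T2 hT1 hT2 hcomm hU1 hU2
end

section
/- Let T1, T2 be q-commuting contractions on H with T = T1T2, and let Q be the positive square root of the SOT-limit of TⁿT*ⁿ. Then for i = 1, 2 and all h ∈ H, ⟨Ti Q² Ti* h, h⟩ ≤ ⟨Q² h, h⟩; in particular the densely defined maps Xi*: Q h ↦ Q Ti* h extend to contractions on the closure of the range of Q. -/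
open ContinuousLinearMap Filter
open scoped InnerProductSpace Topology

/-!
If `B T = c T B` with `‖c‖ ≤ 1` and `‖B‖ ≤ 1`, then `T*ⁿ B* = c̄ⁿ B* T*ⁿ`, so
`‖T*ⁿ B* h‖ ≤ ‖T*ⁿ h‖` for every `n`. Since `‖T*ⁿ h‖² = Re ⟪Tⁿ T*ⁿ h, h⟫ → Re ⟪Q² h, h⟫ = ‖Q h‖²`,
letting `n → ∞` gives `‖Q B* h‖ ≤ ‖Q h‖`, which is the claimed inequality. This bound makes
`Q h ↦ Q B* h` a well-defined contraction on the range of `Q`, which extends by continuity to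
its closure. Both `T₁` (with `c = q`) and `T₂` (with `c = q⁻¹`) satisfy such a relation with
`T = T₁ T₂`.
-/

theorem mul_pow_eq_smul_pow_mul {R A : Type*} [CommMonoid R] [Monoid A] [MulAction R A]
    [IsScalarTower R A A] [SMulCommClass R A A] {c : R} {T B : A}
    (hBT : B * T = c • (T * B)) (n : ℕ) : B * T ^ n = c ^ n • (T ^ n * B) := by
  induction n with
  | zero => simp
  | succ n ih =>
    rw [pow_succ, ← mul_assoc, ih, smul_mul_assoc, mul_assoc, hBT, mul_smul_comm, smul_smul,
      pow_succ, mul_assoc]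

section Extension

variable {𝕜 E F : Type*} [NontriviallyNormedField 𝕜] [AddCommGroup E] [Module 𝕜 E]
  [NormedAddCommGroup F] [NormedSpace 𝕜 F]

theorem Submodule.exists_extension_topologicalClosure [CompleteSpace F] {p : Submodule 𝕜 F}
    (f : p →L[𝕜] p) :
    ∃ g : p.topologicalClosure →L[𝕜] p.topologicalClosure, ‖g‖ ≤ ‖f‖ ∧
      ∀ x : p, (g ⟨x, p.le_topologicalClosure x.2⟩ : F) = f x := by
  have : CompleteSpace p.topologicalClosure := p.isClosed_topologicalClosure.completeSpace_coe
  let e : p →L[𝕜] p.topologicalClosure :=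
    p.subtypeL.codRestrict _ fun x ↦ p.le_topologicalClosure x.2
  have he : ∀ x, ‖x‖ ≤ (1 : NNReal) * ‖e x‖ := fun x ↦ by simp [e]
  have hdense : DenseRange e :=
    (denseRange_inclusion_iff (s := (p : Set F)) p.le_topologicalClosure).2 subset_rfl
  refine ⟨(e.comp f).extend e, ?_, fun x ↦ ?_⟩
  · calc ‖(e.comp f).extend e‖ ≤ 1 * ‖e.comp f‖ := opNorm_extend_le _ hdense he
      _ ≤ ‖f‖ := by
        rw [one_mul]
        exact opNorm_le_bound _ (norm_nonneg _) fun x ↦ by simpa [e] using f.le_opNorm x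
  · rw [show (⟨x, _⟩ : p.topologicalClosure) = e x from rfl,
      extend_eq _ hdense (isUniformEmbedding_of_bound e he).isUniformInducing]
    rfl

theorem LinearMap.exists_contraction_range (Q : E →ₗ[𝕜] F) (A : E →ₗ[𝕜] E)
    (hA : ∀ h, ‖Q (A h)‖ ≤ ‖Q h‖) :
    ∃ X : LinearMap.range Q →L[𝕜] LinearMap.range Q, ‖X‖ ≤ 1 ∧
      ∀ h, X (Q.rangeRestrict h) = Q.rangeRestrict (A h) := by
  have hker : LinearMap.ker Q ≤ LinearMap.ker (Q.rangeRestrict ∘ₗ A) := fun h hh ↦ by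
    simpa [LinearMap.mem_ker, ← norm_le_zero_iff, Subtype.ext_iff, (LinearMap.mem_ker).1 hh]
      using hA h
  let X : LinearMap.range Q →ₗ[𝕜] LinearMap.range Q :=
    (LinearMap.ker Q).liftQ _ hker ∘ₗ Q.quotKerEquivRange.symm.toLinearMap
  have hX : ∀ h, X (Q.rangeRestrict h) = Q.rangeRestrict (A h) := fun h ↦ by
    change (LinearMap.ker Q).liftQ _ hker (Q.quotKerEquivRange.symm ⟨Q h, Q.mem_range_self h⟩) = _
    rw [LinearMap.quotKerEquivRange_symm_apply_image]
    rfl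
  refine ⟨X.mkContinuous 1 fun x ↦ ?_, X.mkContinuous_norm_le zero_le_one _, hX⟩
  obtain ⟨h, rfl⟩ := Q.surjective_rangeRestrict x
  rw [hX, one_mul]
  exact hA h

theorem LinearMap.exists_contraction_topologicalClosure_range [CompleteSpace F]
    (Q : E →ₗ[𝕜] F) (A : E →ₗ[𝕜] E) (hA : ∀ h, ‖Q (A h)‖ ≤ ‖Q h‖) :
    ∃ X : (LinearMap.range Q).topologicalClosure →L[𝕜] (LinearMap.range Q).topologicalClosure,
      ‖X‖ ≤ 1 ∧ ∀ (h : E) (x : (LinearMap.range Q).topologicalClosure),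
        (x : F) = Q h → (X x : F) = Q (A h) := by
  obtain ⟨X₀, hX₀_norm, hX₀⟩ := Q.exists_contraction_range A hA
  obtain ⟨X, hX_norm, hX⟩ := Submodule.exists_extension_topologicalClosure X₀
  refine ⟨X, hX_norm.trans hX₀_norm, fun h x hx ↦ ?_⟩
  have hx' : x = ⟨Q.rangeRestrict h, Submodule.le_topologicalClosure _ (Q.rangeRestrict h).2⟩ :=
    Subtype.ext hx
  rw [hx', hX, hX₀]
  rfl

end Extension

section Hilbert

variable {𝕜 H : Type*} [RCLike 𝕜] [NormedAddCommGroup H] [InnerProductSpace 𝕜 H] [CompleteSpace H]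

theorem norm_adjoint_pow_apply_adjoint_le {c : 𝕜} (hc : ‖c‖ ≤ 1) {T B : H →L[𝕜] H}
    (hB : ‖B‖ ≤ 1) (hBT : B * T = c • (T * B)) (n : ℕ) (h : H) :
    ‖(adjoint T ^ n) (adjoint B h)‖ ≤ ‖(adjoint T ^ n) h‖ := by
  have hstar : adjoint T ^ n * adjoint B = star (c ^ n) • (adjoint B * adjoint T ^ n) := by
    simp only [← star_eq_adjoint, ← star_pow, ← star_mul, ← star_smul,
      mul_pow_eq_smul_pow_mul hBT]
  calc ‖(adjoint T ^ n) (adjoint B h)‖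
      = ‖star (c ^ n)‖ * ‖adjoint B ((adjoint T ^ n) h)‖ := by
        rw [← mul_apply_eq_comp, hstar, smul_apply, norm_smul, mul_apply_eq_comp]
    _ ≤ 1 * (1 * ‖(adjoint T ^ n) h‖) := by
        gcongr
        · simpa using pow_le_one₀ (norm_nonneg c) hc
        · refine (le_opNorm _ _).trans (mul_le_mul_of_nonneg_right ?_ (norm_nonneg _))
          rwa [LinearIsometryEquiv.norm_map]
    _ = ‖(adjoint T ^ n) h‖ := by ring

theorem tendsto_norm_adjoint_pow_apply_sq {T P : H →L[𝕜] H}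
    (hP : ∀ h, Tendsto (fun n : ℕ ↦ (T ^ n * adjoint T ^ n) h) atTop (𝓝 (P h))) (h : H) :
    Tendsto (fun n : ℕ ↦ ‖(adjoint T ^ n) h‖ ^ 2) atTop (𝓝 (RCLike.re ⟪P h, h⟫_𝕜)) := by
  have hnorm : ∀ n : ℕ, ‖(adjoint T ^ n) h‖ ^ 2 = RCLike.re ⟪(T ^ n * adjoint T ^ n) h, h⟫_𝕜 := by
    intro n
    rw [apply_norm_sq_eq_inner_adjoint_left, ← star_eq_adjoint, star_pow, star_eq_adjoint,
      adjoint_adjoint]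
    rfl
  simp only [hnorm]
  exact (RCLike.continuous_re.tendsto _).comp ((hP h).inner tendsto_const_nhds)

theorem re_inner_apply_adjoint_apply_le {c : 𝕜} (hc : ‖c‖ ≤ 1) {T B P : H →L[𝕜] H}
    (hB : ‖B‖ ≤ 1) (hBT : B * T = c • (T * B))
    (hP : ∀ h, Tendsto (fun n : ℕ ↦ (T ^ n * adjoint T ^ n) h) atTop (𝓝 (P h))) (h : H) :
    RCLike.re ⟪P (adjoint B h), adjoint B h⟫_𝕜 ≤ RCLike.re ⟪P h, h⟫_𝕜 := by
  refine le_of_tendsto_of_tendsto' (tendsto_norm_adjoint_pow_apply_sq hP _)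
    (tendsto_norm_adjoint_pow_apply_sq hP h) fun n ↦ ?_
  gcongr
  exact norm_adjoint_pow_apply_adjoint_le hc hB hBT n h

theorem IsSelfAdjoint.re_inner_mul_self_apply {Q : H →L[𝕜] H} (hQ : IsSelfAdjoint Q) (h : H) :
    RCLike.re ⟪(Q * Q) h, h⟫_𝕜 = ‖Q h‖ ^ 2 := by
  rw [apply_norm_sq_eq_inner_adjoint_left, hQ.adjoint_eq]
  rfl

theorem exists_contraction_of_mul_eq_smul_mul {c : 𝕜} (hc : ‖c‖ ≤ 1) {T B Q : H →L[𝕜] H}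
    (hB : ‖B‖ ≤ 1) (hBT : B * T = c • (T * B)) (hQ : IsSelfAdjoint Q)
    (hQT : ∀ h, Tendsto (fun n : ℕ ↦ (T ^ n * adjoint T ^ n) h) atTop (𝓝 ((Q * Q) h))) :
    (∀ h, RCLike.re ⟪(B * (Q * Q) * adjoint B) h, h⟫_𝕜 ≤ RCLike.re ⟪(Q * Q) h, h⟫_𝕜) ∧
      ∃ X : (LinearMap.range (Q : H →ₗ[𝕜] H)).topologicalClosure →L[𝕜]
          (LinearMap.range (Q : H →ₗ[𝕜] H)).topologicalClosure,
        ‖X‖ ≤ 1 ∧ ∀ (h : H) (x : (LinearMap.range (Q : H →ₗ[𝕜] H)).topologicalClosure),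
          (x : H) = Q h → (X x : H) = Q (adjoint B h) := by
  have hle := re_inner_apply_adjoint_apply_le hc hB hBT hQT
  refine ⟨fun h ↦ ?_, LinearMap.exists_contraction_topologicalClosure_range _ _ fun h ↦ ?_⟩
  · rw [mul_apply_eq_comp, mul_apply_eq_comp, ← adjoint_inner_right]
    exact hle h
  · have := hle h
    rwa [hQ.re_inner_mul_self_apply, hQ.re_inner_mul_self_apply,
      pow_le_pow_iff_left₀ (norm_nonneg _) (norm_nonneg _) two_ne_zero] at this

end Hilbert

/-- Let `T1, T2` be `q`-commuting contractions, `T = T1 T2`, and `Q` the positive square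
root of the SOT-limit of `Tⁿ T*ⁿ`.  Then `⟨Tᵢ Q² Tᵢ* h, h⟩ ≤ ⟨Q² h, h⟩` for `i = 1, 2`; in
particular the densely defined maps `Q h ↦ Q Tᵢ* h` extend to contractions on the closure
of the range of `Q`. -/
theorem Q_contraction_extensions
    {H : Type*} [NormedAddCommGroup H] [InnerProductSpace ℂ H] [CompleteSpace H]
    (q : ℂ) (hq : ‖q‖ = 1)
    (T1 T2 : H →L[ℂ] H) (hT1 : ‖T1‖ ≤ 1) (hT2 : ‖T2‖ ≤ 1)
    (hcomm : T1 * T2 = q • (T2 * T1))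
    (Q : H →L[ℂ] H) (hQ : Q.IsPositive)
    (hQlim : ∀ h : H, Tendsto
      (fun n : ℕ => ((T1 * T2) ^ n * (adjoint (T1 * T2)) ^ n) h) atTop (𝓝 ((Q * Q) h))) :
    (∀ h : H,
      (⟪(T1 * (Q * Q) * adjoint T1) h, h⟫_ℂ).re ≤ (⟪(Q * Q) h, h⟫_ℂ).re ∧
      (⟪(T2 * (Q * Q) * adjoint T2) h, h⟫_ℂ).re ≤ (⟪(Q * Q) h, h⟫_ℂ).re) ∧
    ∃ X1 X2 : (LinearMap.range (Q : H →ₗ[ℂ] H)).topologicalClosure →L[ℂ]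
        (LinearMap.range (Q : H →ₗ[ℂ] H)).topologicalClosure,
      ‖X1‖ ≤ 1 ∧ ‖X2‖ ≤ 1 ∧
      (∀ (h : H) (x : (LinearMap.range (Q : H →ₗ[ℂ] H)).topologicalClosure),
        (x : H) = Q h → ((X1 x : (LinearMap.range (Q : H →ₗ[ℂ] H)).topologicalClosure) : H)
          = Q (adjoint T1 h)) ∧
      (∀ (h : H) (x : (LinearMap.range (Q : H →ₗ[ℂ] H)).topologicalClosure),
        (x : H) = Q h → ((X2 x : (LinearMap.range (Q : H →ₗ[ℂ] H)).topologicalClosure) : H)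
          = Q (adjoint T2 h)) := by
  have hq0 : q ≠ 0 := norm_ne_zero_iff.1 (hq ▸ one_ne_zero)
  have hT1T : T1 * (T1 * T2) = q • (T1 * T2 * T1) := by
    conv_lhs => rw [hcomm]
    rw [mul_smul_comm, ← mul_assoc]
  have hT2T : T2 * (T1 * T2) = q⁻¹ • (T1 * T2 * T2) := by
    conv_rhs => rw [hcomm]
    rw [smul_mul_assoc, smul_smul, inv_mul_cancel₀ hq0, one_smul, mul_assoc]
  obtain ⟨hineq1, X1, hX1_norm, hX1⟩ :=
    exists_contraction_of_mul_eq_smul_mul hq.le hT1 hT1T hQ.isSelfAdjoint hQlim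
  obtain ⟨hineq2, X2, hX2_norm, hX2⟩ :=
    exists_contraction_of_mul_eq_smul_mul (by rw [norm_inv, hq, inv_one]) hT2 hT2T
      hQ.isSelfAdjoint hQlim
  exact ⟨fun h ↦ ⟨hineq1 h, hineq2 h⟩, X1, X2, hX1_norm, hX2_norm, hX1, hX2⟩
end

section
/- Let T1, T2 be q-commuting contractions on H with T = T1T2, Q the positive square root of the SOT-limit of TⁿT*ⁿ, and X1*, X2*, X* the contractions on the closure of the range of Q determined by Xi* Q = Q Ti* and X* Q = Q T*. Then X1* X2* = q X* and X2* X1* = X*; in particular (X1*, X2*) is a q-commuting pair of isometries (since X* and hence qX* is an isometry). -/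
/-!
Passing to the limit in `Tⁿ⁺¹ T*ⁿ⁺¹ = T (Tⁿ T*ⁿ) T*` gives `T Q² T* = Q²`, i.e.
`‖Q T* h‖ = ‖Q h‖`, so `X*` is isometric on the dense subspace `Ran Q` of `M`, hence on `M`.
The identities `X2* X1* = X*` and `X1* X2* = q X*` hold on `Ran Q` because `T* = T2* T1*` and
`T1* T2* = q T2* T1*` (as `q q̄ = 1`), hence on `M` by continuity. Finally, for contractions,
`‖x‖ = ‖X2* X1* x‖ ≤ ‖X1* x‖ ≤ ‖x‖`, and similarly for `X2*`.
-/

open ContinuousLinearMap Filter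
open scoped Topology

theorem star_mul_star_eq_smul_of_mul_eq_smul {R : Type*} [Ring R] [StarRing R] [Module ℂ R]
    [StarModule ℂ R] {q : ℂ} (hq : ‖q‖ = 1) {a b : R} (h : a * b = q • (b * a)) :
    star a * star b = q • (star b * star a) := by
  have hstar : star b * star a = star q • (star a * star b) := by
    rw [← star_mul, h, star_smul, star_mul]
  have hq_mul_conj : q * star q = 1 := by
    rw [Complex.star_def, Complex.mul_conj', hq]; norm_num
  rw [hstar, smul_smul, hq_mul_conj, one_smul]

theorem ContinuousLinearMap.mul_mul_eq_of_tendsto_pow_mul_pow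
    {𝕜 E : Type*} [NontriviallyNormedField 𝕜] [NormedAddCommGroup E] [NormedSpace 𝕜 E]
    {T S P : E →L[𝕜] E} (hP : ∀ h : E, Tendsto (fun n : ℕ => (T ^ n * S ^ n) h) atTop (𝓝 (P h))) :
    T * P * S = P := by
  ext h
  have hstep (n : ℕ) : (T ^ (n + 1) * S ^ (n + 1)) h = T ((T ^ n * S ^ n) (S h)) := by
    rw [pow_succ' T, pow_succ S]; rfl
  have hshift : Tendsto (fun n : ℕ => T ((T ^ n * S ^ n) (S h))) atTop (𝓝 (P h)) :=
    ((hP h).comp (tendsto_add_atTop_nat 1)).congr hstep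
  exact tendsto_nhds_unique ((T.continuous.tendsto _).comp (hP (S h))) hshift

theorem ContinuousLinearMap.norm_apply_adjoint_eq_of_mul_mul_adjoint
    {𝕜 E : Type*} [RCLike 𝕜] [NormedAddCommGroup E] [InnerProductSpace 𝕜 E] [CompleteSpace E]
    {T Q : E →L[𝕜] E} (hQ : IsSelfAdjoint Q) (hTQ : T * (Q * Q) * adjoint T = Q * Q) (h : E) :
    ‖Q (adjoint T h)‖ = ‖Q h‖ := by
  have hsq : ‖Q (adjoint T h)‖ ^ 2 = ‖Q h‖ ^ 2 := by
    rw [← comp_apply, apply_norm_sq_eq_inner_adjoint_left, apply_norm_sq_eq_inner_adjoint_left,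
      adjoint_comp, adjoint_adjoint, hQ.adjoint_eq]
    exact congrArg (fun A : E →L[𝕜] E => RCLike.re (inner 𝕜 (A h) h)) hTQ
  exact (pow_left_inj₀ (norm_nonneg _) (norm_nonneg _) two_ne_zero).1 hsq

theorem ContinuousLinearMap.norm_apply_eq_of_norm_comp_apply_eq
    {𝕜 E F G : Type*} [NontriviallyNormedField 𝕜] [NormedAddCommGroup E] [NormedSpace 𝕜 E]
    [NormedAddCommGroup F] [NormedSpace 𝕜 F] [NormedAddCommGroup G] [NormedSpace 𝕜 G]
    {A : E →L[𝕜] F} {B : F →L[𝕜] G} (hA : ‖A‖ ≤ 1) (hB : ‖B‖ ≤ 1) (hBA : ∀ x, ‖B (A x)‖ = ‖x‖)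
    (x : E) : ‖A x‖ = ‖x‖ :=
  le_antisymm (A.le_of_opNorm_le hA x |>.trans_eq (one_mul _))
    ((hBA x).symm.le.trans (B.le_of_opNorm_le hB (A x) |>.trans_eq (one_mul _)))

section RangeClosure

variable {𝕜 E F : Type*} [NormedField 𝕜] [NormedAddCommGroup E] [NormedSpace 𝕜 E]
  [NormedAddCommGroup F] [NormedSpace 𝕜 F] (Q : E →L[𝕜] F)

theorem ContinuousLinearMap.dense_coe_preimage_range :
    Dense {x : (LinearMap.range (Q : E →ₗ[𝕜] F)).topologicalClosure | ∃ h, (x : F) = Q h} := by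
  rw [Topology.IsInducing.subtypeVal.dense_iff]
  rintro ⟨x, hx⟩
  rw [Submodule.topologicalClosure_coe] at hx
  refine closure_mono ?_ hx
  rintro _ ⟨h, rfl⟩
  exact ⟨⟨Q h, Submodule.le_topologicalClosure _ ⟨h, rfl⟩⟩, ⟨h, rfl⟩, rfl⟩

theorem ContinuousLinearMap.ext_on_topologicalClosure_range
    {G : Type*} [TopologicalSpace G] [T2Space G]
    {f g : (LinearMap.range (Q : E →ₗ[𝕜] F)).topologicalClosure → G}
    (hf : Continuous f) (hg : Continuous g)
    (hfg : ∀ (h : E) (x : (LinearMap.range (Q : E →ₗ[𝕜] F)).topologicalClosure),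
      (x : F) = Q h → f x = g x) :
    f = g := by
  refine hf.ext_on Q.dense_coe_preimage_range hg ?_
  rintro x ⟨h, hx⟩
  exact hfg h x hx

end RangeClosure

theorem qcomm_isometries_on_Q_space_general
    {H : Type*} [NormedAddCommGroup H] [InnerProductSpace ℂ H] [CompleteSpace H]
    (q : ℂ) (hq : ‖q‖ = 1)
    (T1 T2 : H →L[ℂ] H)
    (hcomm : T1 * T2 = q • (T2 * T1))
    (Q : H →L[ℂ] H) (hQ : Q.IsPositive)
    (hQlim : ∀ h : H, Tendsto
      (fun n : ℕ => ((T1 * T2) ^ n * (adjoint (T1 * T2)) ^ n) h) atTop (𝓝 ((Q * Q) h)))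
    (M : Submodule ℂ H) (hM : M = (LinearMap.range (Q : H →ₗ[ℂ] H)).topologicalClosure)
    (Y1 Y2 Y : M →L[ℂ] M)
    (hY1norm : ‖Y1‖ ≤ 1) (hY2norm : ‖Y2‖ ≤ 1)
    (hY1 : ∀ (h : H) (x : M), (x : H) = Q h → ((Y1 x : M) : H) = Q (adjoint T1 h))
    (hY2 : ∀ (h : H) (x : M), (x : H) = Q h → ((Y2 x : M) : H) = Q (adjoint T2 h))
    (hY : ∀ (h : H) (x : M), (x : H) = Q h → ((Y x : M) : H) = Q (adjoint (T1 * T2) h)) :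
    Y1 ∘L Y2 = q • Y ∧
    Y2 ∘L Y1 = Y ∧
    Y1 ∘L Y2 = q • (Y2 ∘L Y1) ∧
    (∀ x : M, ‖Y1 x‖ = ‖x‖) ∧
    (∀ x : M, ‖Y2 x‖ = ‖x‖) := by
  subst hM
  have hadjT (h : H) : adjoint (T1 * T2) h = adjoint T2 (adjoint T1 h) := by
    rw [← star_eq_adjoint, star_mul]; rfl
  have hadj (h : H) : adjoint T1 (adjoint T2 h) = q • adjoint T2 (adjoint T1 h) :=
    DFunLike.congr_fun (star_mul_star_eq_smul_of_mul_eq_smul hq hcomm) h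
  have hnormQ := norm_apply_adjoint_eq_of_mul_mul_adjoint hQ.isSelfAdjoint
    (mul_mul_eq_of_tendsto_pow_mul_pow hQlim)
  have hYiso : ∀ x, ‖Y x‖ = ‖x‖ := congrFun <|
    Q.ext_on_topologicalClosure_range (continuous_norm.comp Y.continuous) continuous_norm
      fun h x hx => by rw [← Submodule.norm_coe, hY h x hx, hnormQ, ← hx, Submodule.norm_coe]
  have hY2Y1 : Y2 ∘L Y1 = Y := coeFn_injective <|
    Q.ext_on_topologicalClosure_range (Y2 ∘L Y1).continuous Y.continuous
      fun h x hx => Subtype.ext <| by rw [comp_apply, hY2 _ _ (hY1 h x hx), hY h x hx, hadjT]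
  have hY1Y2 : Y1 ∘L Y2 = q • Y := coeFn_injective <|
    Q.ext_on_topologicalClosure_range (Y1 ∘L Y2).continuous (q • Y).continuous
      fun h x hx => Subtype.ext <| by
        rw [comp_apply, hY1 _ _ (hY2 h x hx), smul_apply, Submodule.coe_smul, hY h x hx, hadjT,
          hadj, map_smul]
  refine ⟨hY1Y2, hY2Y1, hY2Y1 ▸ hY1Y2, ?_, ?_⟩
  · exact norm_apply_eq_of_norm_comp_apply_eq hY1norm hY2norm fun x => by
      rw [← comp_apply, hY2Y1, hYiso]
  · exact norm_apply_eq_of_norm_comp_apply_eq hY2norm hY1norm fun x => by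
      rw [← comp_apply, hY1Y2, smul_apply, norm_smul, hq, one_mul, hYiso]

/-- Let `T1, T2` be `q`-commuting contractions, `T = T1 T2`, `Q` the positive square root
of the SOT-limit of `Tⁿ T*ⁿ`, and `X1*, X2*, X*` the contractions on the closure of the
range of `Q` determined by `Xᵢ* Q = Q Tᵢ*` and `X* Q = Q T*`.  Then `X1* X2* = q X*` and
`X2* X1* = X*`; in particular `(X1*, X2*)` is a `q`-commuting pair of isometries. -/
theorem qcomm_isometries_on_Q_space
    {H : Type*} [NormedAddCommGroup H] [InnerProductSpace ℂ H] [CompleteSpace H]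
    (q : ℂ) (hq : ‖q‖ = 1)
    (T1 T2 : H →L[ℂ] H) (hT1 : ‖T1‖ ≤ 1) (hT2 : ‖T2‖ ≤ 1)
    (hcomm : T1 * T2 = q • (T2 * T1))
    (Q : H →L[ℂ] H) (hQ : Q.IsPositive)
    (hQlim : ∀ h : H, Tendsto
      (fun n : ℕ => ((T1 * T2) ^ n * (adjoint (T1 * T2)) ^ n) h) atTop (𝓝 ((Q * Q) h)))
    (M : Submodule ℂ H) (hM : M = (LinearMap.range (Q : H →ₗ[ℂ] H)).topologicalClosure)
    (Y1 Y2 Y : M →L[ℂ] M)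
    (hY1norm : ‖Y1‖ ≤ 1) (hY2norm : ‖Y2‖ ≤ 1) (hYnorm : ‖Y‖ ≤ 1)
    (hY1 : ∀ (h : H) (x : M), (x : H) = Q h → ((Y1 x : M) : H) = Q (adjoint T1 h))
    (hY2 : ∀ (h : H) (x : M), (x : H) = Q h → ((Y2 x : M) : H) = Q (adjoint T2 h))
    (hY : ∀ (h : H) (x : M), (x : H) = Q h → ((Y x : M) : H) = Q (adjoint (T1 * T2) h)) :
    Y1 ∘L Y2 = q • Y ∧
    Y2 ∘L Y1 = Y ∧
    Y1 ∘L Y2 = q • (Y2 ∘L Y1) ∧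
    (∀ x : M, ‖Y1 x‖ = ‖x‖) ∧
    (∀ x : M, ‖Y2 x‖ = ‖x‖) :=
  qcomm_isometries_on_Q_space_general q hq T1 T2 hcomm Q hQ hQlim M hM Y1 Y2 Y hY1norm hY2norm hY1
    hY2 hY
end

section
/- Let T1, T2 be q-commuting contractions on H and T = T1T2. Then there exists a pair of bounded operators (G1, G2) on the defect space D_{T*} satisfying the fundamental equations D_{T*} G1 D_{T*} = T1* − T2 T* and D_{T*} G2 D_{T*} = T2* − q T1 T*, and this pair is unique. -/
/-!
Write `D_{Z*} = (1 - Z Z*)^{1/2}` for a contraction `Z`, so that `‖D_{Z*} h‖² = ‖h‖² - ‖Z* h‖²`.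
Since `T* = T2* T1*` and, by `q`-commutativity, `‖T* h‖ = ‖T1* T2* h‖`, both `D_{T2*} T1*` and
`D_{T2*}` are dominated by `D_{T*}`: `‖D_{T2*} T1* h‖, ‖D_{T2*} h‖ ≤ ‖D_{T*} h‖`. Hence they factor
as `W D_{T*}` and `V D_{T*}` with `W, V` bounded on the defect space (Douglas' lemma), and
`G1 = V* W` satisfies `D_{T*} G1 D_{T*} = D_{T2*}² T1* = T1* - T2 T*`; `G2` is obtained in the
same way with `T1` and `T2` exchanged. Uniqueness holds because `D_{T*}` is injective on the
closure of its range, in which its range is dense.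
-/

open ContinuousLinearMap

local notation "𝒟" D:max =>
  Submodule.topologicalClosure (LinearMap.range (ContinuousLinearMap.toLinearMap D))

section DenseExtension

variable {𝕜 E F G : Type*} [NontriviallyNormedField 𝕜] [AddCommGroup E] [Module 𝕜 E]
  [NormedAddCommGroup F] [NormedSpace 𝕜 F] [NormedAddCommGroup G] [NormedSpace 𝕜 G]

def LinearMap.codRestrictClosureRange (D : E →ₗ[𝕜] F) :
    E →ₗ[𝕜] (LinearMap.range D).topologicalClosure :=
  D.codRestrict _ fun x => Submodule.le_topologicalClosure _ (LinearMap.mem_range_self D x)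

theorem LinearMap.denseRange_codRestrictClosureRange (D : E →ₗ[𝕜] F) :
    DenseRange D.codRestrictClosureRange := by
  refine Subtype.dense_iff.mpr ?_
  rw [← Set.range_comp]
  exact (LinearMap.range D).topologicalClosure_coe.subset

theorem LinearMap.exists_extend_closureRange_of_norm_le [CompleteSpace G]
    (D : E →ₗ[𝕜] F) (A : E →ₗ[𝕜] G) (C : ℝ) (hA : ∀ h, ‖A h‖ ≤ C * ‖D h‖) :
    ∃ W : (LinearMap.range D).topologicalClosure →L[𝕜] G,
      ∀ (h : E) (x : (LinearMap.range D).topologicalClosure), (x : F) = D h → W x = A h := by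
  refine ⟨A.extendOfNorm D.codRestrictClosureRange, fun h x hx => ?_⟩
  obtain rfl : x = D.codRestrictClosureRange h := Subtype.ext hx
  exact LinearMap.extendOfNorm_eq D.denseRange_codRestrictClosureRange ⟨C, hA⟩ h

end DenseExtension

namespace IsSelfAdjoint

variable {𝕜 E F : Type*} [RCLike 𝕜] [NormedAddCommGroup E] [InnerProductSpace 𝕜 E]
  [CompleteSpace E] [NormedAddCommGroup F] [InnerProductSpace 𝕜 F] [CompleteSpace F]
  {D : E →L[𝕜] E}

theorem eq_zero_of_mem_closure_range (hD : IsSelfAdjoint D) {x : E} (hx : x ∈ 𝒟 D)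
    (hDx : D x = 0) : x = 0 := by
  have hx' : x ∈ (LinearMap.range (D : E →ₗ[𝕜] E))ᗮ := by
    rw [orthogonal_range, hD.adjoint_eq]
    exact hDx
  rw [← Submodule.orthogonal_orthogonal_eq_closure] at hx
  exact Submodule.disjoint_def.mp (Submodule.orthogonal_disjoint _) x hx' hx

theorem ext_of_sandwich_eq (hD : IsSelfAdjoint D) {X : E →L[𝕜] E} {K L : 𝒟 D →L[𝕜] 𝒟 D}
    (hK : ∀ (h : E) (x : 𝒟 D), (x : E) = D h → D (K x) = X h)
    (hL : ∀ (h : E) (x : 𝒟 D), (x : E) = D h → D (L x) = X h) : K = L := by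
  set e := LinearMap.codRestrictClosureRange (D : E →ₗ[𝕜] E)
  have hKL : ∀ h, K (e h) = L (e h) := fun h => by
    have hsub : D ((K (e h) : E) - L (e h)) = 0 := by
      rw [map_sub, hK h _ rfl, hL h _ rfl, sub_self]
    exact sub_eq_zero.mp <|
      Subtype.ext (hD.eq_zero_of_mem_closure_range (K (e h) - L (e h)).2 hsub)
  exact DFunLike.coe_injective
    ((LinearMap.denseRange_codRestrictClosureRange _).equalizer K.continuous L.continuous
      (funext hKL))

theorem exists_sandwich_eq_adjoint_comp (hD : IsSelfAdjoint D) (A B : E →L[𝕜] F) (a b : ℝ)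
    (hA : ∀ h, ‖A h‖ ≤ a * ‖D h‖) (hB : ∀ h, ‖B h‖ ≤ b * ‖D h‖) :
    ∃ G : 𝒟 D →L[𝕜] 𝒟 D, ∀ (h : E) (x : 𝒟 D), (x : E) = D h → D (G x) = (adjoint B ∘L A) h := by
  have : CompleteSpace (𝒟 D) := (Submodule.isClosed_topologicalClosure _).completeSpace_coe
  obtain ⟨WA, hWA⟩ := LinearMap.exists_extend_closureRange_of_norm_le _ (A : E →ₗ[𝕜] F) a hA
  obtain ⟨WB, hWB⟩ := LinearMap.exists_extend_closureRange_of_norm_le _ (B : E →ₗ[𝕜] F) b hB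
  refine ⟨adjoint WB ∘L WA, fun h x hx => ext_inner_left 𝕜 fun v => ?_⟩
  let Dv : 𝒟 D := LinearMap.codRestrictClosureRange (D : E →ₗ[𝕜] E) v
  calc inner 𝕜 v (D (adjoint WB (WA x))) = inner 𝕜 (D v) (adjoint WB (WA x) : E) :=
        (hD.isSymmetric v _).symm
    _ = inner 𝕜 Dv (adjoint WB (WA x)) := rfl
    _ = inner 𝕜 (B v) (A h) := by
        rw [adjoint_inner_right, hWA h x hx, hWB v Dv rfl]; rfl
    _ = inner 𝕜 v ((adjoint B ∘L A) h) := by rw [comp_apply, adjoint_inner_right]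

end IsSelfAdjoint

section Contraction

variable {𝕜 E F : Type*} [RCLike 𝕜] [NormedAddCommGroup E] [InnerProductSpace 𝕜 E] [CompleteSpace E]
  [NormedAddCommGroup F] [InnerProductSpace 𝕜 F] [CompleteSpace F]

theorem IsSelfAdjoint.norm_sq_apply_of_mul_self_eq {X Y : E →L[𝕜] E} (hX : IsSelfAdjoint X)
    (hXY : X * X = 1 - Y * adjoint Y) (x : E) :
    ‖X x‖ ^ 2 = ‖x‖ ^ 2 - ‖adjoint Y x‖ ^ 2 := by
  rw [apply_norm_sq_eq_inner_adjoint_left, apply_norm_sq_eq_inner_adjoint_left, adjoint_adjoint,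
    hX.adjoint_eq, ← mul_def, ← mul_def, hXY, sub_apply, one_apply_eq_self, inner_sub_left, map_sub,
    inner_self_eq_norm_sq]

theorem ContinuousLinearMap.norm_adjoint_apply_le {Y : E →L[𝕜] F} (hY : ‖Y‖ ≤ 1) (x : F) :
    ‖adjoint Y x‖ ≤ ‖x‖ := by
  simpa using (adjoint Y).le_of_opNorm_le (c := 1) (by rwa [LinearIsometryEquiv.norm_map]) x

theorem ContinuousLinearMap.norm_adjoint_smul_apply {c : 𝕜} (hc : ‖c‖ = 1) (Y : E →L[𝕜] F)
    (x : F) : ‖adjoint (c • Y) x‖ = ‖adjoint Y x‖ := by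
  rw [LinearIsometryEquiv.map_smulₛₗ, smul_apply, norm_smul, RCLike.norm_conj, hc, one_mul]

theorem ContinuousLinearMap.adjoint_mul (Y Z : E →L[𝕜] E) :
    adjoint (Y * Z) = adjoint Z * adjoint Y := by
  simp only [← star_eq_adjoint, star_mul]

end Contraction

section ComplexContraction

variable {E : Type*} [NormedAddCommGroup E] [InnerProductSpace ℂ E] [CompleteSpace E]

theorem ContinuousLinearMap.one_sub_mul_adjoint_nonneg {Y : E →L[ℂ] E} (hY : ‖Y‖ ≤ 1) :
    0 ≤ 1 - Y * adjoint Y := by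
  rw [sub_nonneg, ← star_eq_adjoint]
  refine (CStarAlgebra.norm_le_one_iff_of_nonneg _ (mul_star_self_nonneg Y)).mp ?_
  rw [CStarRing.norm_self_mul_star]
  exact mul_le_one₀ hY (norm_nonneg Y) hY

theorem IsSelfAdjoint.exists_sandwich_eq_of_eq_smul_mul {D T Y Z : E →L[ℂ] E}
    (hD : IsSelfAdjoint D) (hDT : D * D = 1 - T * adjoint T) (hY : ‖Y‖ ≤ 1) (hZ : ‖Z‖ ≤ 1)
    {c c' : ℂ} (hc : ‖c‖ = 1) (hc' : ‖c'‖ = 1) (hTYZ : T = c • (Y * Z)) (hTZY : T = c' • (Z * Y)) :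
    ∃ G : 𝒟 D →L[ℂ] 𝒟 D, ∀ (h : E) (x : 𝒟 D), (x : E) = D h →
      D (G x) = (adjoint Y - Z * adjoint Z * adjoint Y) h := by
  set S := CFC.sqrt (1 - Z * adjoint Z)
  have hSS : S * S = 1 - Z * adjoint Z := CFC.sqrt_mul_sqrt_self _ (one_sub_mul_adjoint_nonneg hZ)
  have hS : IsSelfAdjoint S := IsSelfAdjoint.of_nonneg (CFC.sqrt_nonneg _)
  have hT_YZ : ∀ h, ‖adjoint T h‖ = ‖adjoint Z (adjoint Y h)‖ := fun h => by
    rw [hTYZ, norm_adjoint_smul_apply hc, adjoint_mul, mul_apply_eq_comp]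
  have hT_ZY : ∀ h, ‖adjoint T h‖ ≤ ‖adjoint Z h‖ := fun h => by
    rw [hTZY, norm_adjoint_smul_apply hc', adjoint_mul, mul_apply_eq_comp]
    exact norm_adjoint_apply_le hY _
  have hA : ∀ h, ‖(S ∘L adjoint Y) h‖ ≤ 1 * ‖D h‖ := fun h => by
    rw [one_mul, ← sq_le_sq₀ (norm_nonneg _) (norm_nonneg _), comp_apply,
      hS.norm_sq_apply_of_mul_self_eq hSS, hD.norm_sq_apply_of_mul_self_eq hDT, hT_YZ]
    gcongr
    exact norm_adjoint_apply_le hY h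
  have hB : ∀ h, ‖S h‖ ≤ 1 * ‖D h‖ := fun h => by
    rw [one_mul, ← sq_le_sq₀ (norm_nonneg _) (norm_nonneg _),
      hS.norm_sq_apply_of_mul_self_eq hSS, hD.norm_sq_apply_of_mul_self_eq hDT]
    gcongr
    exact hT_ZY h
  obtain ⟨G, hG⟩ := hD.exists_sandwich_eq_adjoint_comp _ _ 1 1 hA hB
  refine ⟨G, fun h x hx => ?_⟩
  rw [hG h x hx, hS.adjoint_eq]
  change ((S * S) * adjoint Y) h = _
  rw [hSS, sub_mul, one_mul]

end ComplexContraction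

/-- Existence and uniqueness of the fundamental operators: for `q`-commuting contractions
`T1, T2` with `T = T1 T2`, there is a unique pair `(G1, G2)` of bounded operators on the
defect space `𝒟_{T*}` (the closure of the range of `D_{T*}`) satisfying
`D_{T*} G1 D_{T*} = T1* − T2 T*` and `D_{T*} G2 D_{T*} = T2* − q T1 T*`. -/
theorem fundamental_operators_exist_unique
    {H : Type*} [NormedAddCommGroup H] [InnerProductSpace ℂ H] [CompleteSpace H]
    (q : ℂ) (hq : ‖q‖ = 1)
    (T1 T2 : H →L[ℂ] H) (hT1 : ‖T1‖ ≤ 1) (hT2 : ‖T2‖ ≤ 1)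
    (hcomm : T1 * T2 = q • (T2 * T1))
    (Dst : H →L[ℂ] H) (hDst : Dst.IsPositive)
    (hDstsq : Dst * Dst = 1 - (T1 * T2) * adjoint (T1 * T2))
    (M : Submodule ℂ H) (hM : M = (LinearMap.range (Dst : H →ₗ[ℂ] H)).topologicalClosure) :
    ∃! G : (M →L[ℂ] M) × (M →L[ℂ] M),
      (∀ (h : H) (x : M), (x : H) = Dst h →
        Dst ((G.1 x : M) : H) = (adjoint T1 - T2 * adjoint (T1 * T2)) h) ∧
      (∀ (h : H) (x : M), (x : H) = Dst h →
        Dst ((G.2 x : M) : H) = (adjoint T2 - q • (T1 * adjoint (T1 * T2))) h) := by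
  subst hM
  have hD : IsSelfAdjoint Dst := hDst.isSelfAdjoint
  have hX1 : adjoint T1 - T2 * adjoint T2 * adjoint T1 = adjoint T1 - T2 * adjoint (T1 * T2) := by
    rw [adjoint_mul, mul_assoc]
  have hX2 : adjoint T2 - T1 * adjoint T1 * adjoint T2
      = adjoint T2 - q • (T1 * adjoint (T1 * T2)) := by
    rw [hcomm, LinearIsometryEquiv.map_smulₛₗ, adjoint_mul, mul_smul_comm, smul_smul,
      RCLike.mul_conj, hq]
    simp [mul_assoc]
  obtain ⟨G1, hG1⟩ := hD.exists_sandwich_eq_of_eq_smul_mul hDstsq hT1 hT2 norm_one hq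
    (one_smul ℂ _).symm hcomm
  obtain ⟨G2, hG2⟩ := hD.exists_sandwich_eq_of_eq_smul_mul hDstsq hT2 hT1 hq norm_one
    hcomm (one_smul ℂ _).symm
  simp only [hX1] at hG1
  simp only [hX2] at hG2
  refine ⟨(G1, G2), ⟨hG1, hG2⟩, ?_⟩
  rintro ⟨K1, K2⟩ ⟨hK1, hK2⟩
  exact Prod.ext (hD.ext_of_sandwich_eq hK1 hG1) (hD.ext_of_sandwich_eq hK2 hG2)
end

section
/- Let T1, T2 be q-commuting contractions on H and (F; Λ, P, U) a special Andô tuple for (T1, T2). Then T1*T1 + D_T Λ* U* P U Λ D_T = I and T2*T2 + D_T Λ* P^⊥ Λ D_T = I. -/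
/-!
An operator `V* Q V` is determined by the form `(x, y) ↦ ⟪V x, Q V y⟫`. Since
`U Λ D_T h = (D_{T1} h, D_{T2} T1 h, 0)`, the form of `D_T Λ* U* P U Λ D_T` is `⟪D_{T1} x, D_{T1} y⟫`,
so this operator is `D_{T1}² = 1 - T1* T1`; likewise `P^⊥ Λ D_T h = (0, D_{T2} h, 0)` makes
`D_T Λ* P^⊥ Λ D_T = D_{T2}² = 1 - T2* T2`.
-/

open ContinuousLinearMap

instance piLpThreeCompleteSpace {H : Type*} [NormedAddCommGroup H] [CompleteSpace H] :
    CompleteSpace (PiLp 2 fun _ : Fin 3 => H) :=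
  inferInstance

section

variable {𝕜 E G : Type*} [RCLike 𝕜]
  [NormedAddCommGroup E] [InnerProductSpace 𝕜 E] [NormedAddCommGroup G] [InnerProductSpace 𝕜 G]

theorem PiLp.inner_toLp_three (a b c a' b' c' : E) :
    inner 𝕜 !₂[a, b, c] !₂[a', b', c']
      = inner 𝕜 a a' + inner 𝕜 b b' + inner 𝕜 c c' := by
  simp [PiLp.inner_apply, Fin.sum_univ_three, add_assoc]

variable [CompleteSpace E] [CompleteSpace G]

theorem ContinuousLinearMap.adjoint_comp_eq_of_inner {F : Type*}
    [NormedAddCommGroup F] [InnerProductSpace 𝕜 F] [CompleteSpace F]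
    {S S' : E →L[𝕜] F} {A A' : E →L[𝕜] G}
    (h : ∀ x y, inner 𝕜 (S x) (S' y) = inner 𝕜 (A x) (A' y)) :
    adjoint S ∘L S' = adjoint A ∘L A' := by
  ext y
  refine ext_inner_left 𝕜 fun x => ?_
  simp [adjoint_inner_right, h]

variable {P : PiLp 2 (fun _ : Fin 3 => G) →L[𝕜] PiLp 2 (fun _ : Fin 3 => G)}
  {V : E →L[𝕜] PiLp 2 (fun _ : Fin 3 => G)} {A B : E →L[𝕜] G}
  (hP : ∀ v : PiLp 2 (fun _ : Fin 3 => G),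
    P v = (WithLp.equiv 2 (Fin 3 → G)).symm ![(WithLp.equiv 2 (Fin 3 → G)) v 0, 0, 0])
  (hV : ∀ x, V x = (WithLp.equiv 2 (Fin 3 → G)).symm ![A x, B x, 0])
include hP hV

theorem adjoint_comp_proj_fst_comp :
    adjoint V ∘L P ∘L V = adjoint A ∘L A :=
  adjoint_comp_eq_of_inner fun x y => by
    simp [hP, hV, PiLp.inner_toLp_three]

theorem adjoint_comp_one_sub_proj_fst_comp :
    adjoint V ∘L (1 - P) ∘L V = adjoint B ∘L B :=
  adjoint_comp_eq_of_inner fun x y => by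
    simp [hP, hV, inner_sub_right, PiLp.inner_toLp_three]

end

theorem special_Ando_tuple_identities_one_general
    {H : Type*} [NormedAddCommGroup H] [InnerProductSpace ℂ H] [CompleteSpace H]
    (T1 T2 : H →L[ℂ] H)
    (DT1 DT2 : H →L[ℂ] H)
    (hDT1 : DT1.IsPositive) (hDT2 : DT2.IsPositive)
    (hDT1sq : DT1 * DT1 = 1 - adjoint T1 * T1)
    (hDT2sq : DT2 * DT2 = 1 - adjoint T2 * T2)
    (P U : PiLp 2 (fun _ : Fin 3 => H) →L[ℂ] PiLp 2 (fun _ : Fin 3 => H))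
    (hP : ∀ v : PiLp 2 (fun _ : Fin 3 => H),
      P v = (WithLp.equiv 2 (Fin 3 → H)).symm ![(WithLp.equiv 2 (Fin 3 → H)) v 0, 0, 0])
    (hUact : ∀ h : H,
      U ((WithLp.equiv 2 (Fin 3 → H)).symm ![DT1 (T2 h), DT2 h, 0])
        = (WithLp.equiv 2 (Fin 3 → H)).symm ![DT1 h, DT2 (T1 h), 0])
    -- K = Λ ∘ D_T
    (K : H →L[ℂ] PiLp 2 (fun _ : Fin 3 => H))
    (hK : ∀ h : H, K h = (WithLp.equiv 2 (Fin 3 → H)).symm ![DT1 (T2 h), DT2 h, 0]) :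
    adjoint T1 ∘L T1 + adjoint K ∘L adjoint U ∘L P ∘L U ∘L K = 1 ∧
    adjoint T2 ∘L T2 + adjoint K ∘L (1 - P) ∘L K = 1 := by
  have hUK : ∀ h, (U ∘L K) h = (WithLp.equiv 2 (Fin 3 → H)).symm ![DT1 h, (DT2 ∘L T1) h, 0] :=
    fun h => by rw [comp_apply, hK, hUact, comp_apply]
  have hKUPUK : adjoint K ∘L adjoint U ∘L P ∘L U ∘L K = adjoint DT1 ∘L DT1 := by
    rw [← adjoint_comp_proj_fst_comp hP hUK, adjoint_comp]
    rfl
  constructor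
  · rw [hKUPUK, hDT1.isSelfAdjoint.adjoint_eq, ← mul_def, ← mul_def, hDT1sq]
    abel
  · rw [adjoint_comp_one_sub_proj_fst_comp (A := DT1 ∘L T2) hP hK,
      hDT2.isSelfAdjoint.adjoint_eq, ← mul_def, ← mul_def, hDT2sq]
    abel

/-- For a special Andô tuple `(F; Λ, P, U)` of a `q`-commuting contractive pair `(T1, T2)`
(with `F = 𝒟_{T1} ⊕ 𝒟_{T2} ⊕ H` realized inside `H ⊕₂ H ⊕₂ H`, `Λ D_T h = (D_{T1}T2 h, D_{T2}h, 0)`,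
`U` the unitary extending `(D_{T1}T2 h, D_{T2}h, 0) ↦ (D_{T1}h, D_{T2}T1 h, 0)` and `P` the
projection onto the first summand), writing `K = Λ D_T`, one has
`T1* T1 + D_T Λ* U* P U Λ D_T = 1` and `T2* T2 + D_T Λ* P^⊥ Λ D_T = 1`. -/
theorem special_Ando_tuple_identities_one
    {H : Type*} [NormedAddCommGroup H] [InnerProductSpace ℂ H] [CompleteSpace H]
    (q : ℂ) (hq : ‖q‖ = 1)
    (T1 T2 : H →L[ℂ] H) (hT1 : ‖T1‖ ≤ 1) (hT2 : ‖T2‖ ≤ 1)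
    (hcomm : T1 * T2 = q • (T2 * T1))
    (DT DT1 DT2 : H →L[ℂ] H)
    (hDT : DT.IsPositive) (hDT1 : DT1.IsPositive) (hDT2 : DT2.IsPositive)
    (hDTsq : DT * DT = 1 - adjoint (T1 * T2) * (T1 * T2))
    (hDT1sq : DT1 * DT1 = 1 - adjoint T1 * T1)
    (hDT2sq : DT2 * DT2 = 1 - adjoint T2 * T2)
    (P U : PiLp 2 (fun _ : Fin 3 => H) →L[ℂ] PiLp 2 (fun _ : Fin 3 => H))
    (hP : ∀ v : PiLp 2 (fun _ : Fin 3 => H),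
      P v = (WithLp.equiv 2 (Fin 3 → H)).symm ![(WithLp.equiv 2 (Fin 3 → H)) v 0, 0, 0])
    (hUuni : adjoint U ∘L U = 1 ∧ U ∘L adjoint U = 1)
    (hUact : ∀ h : H,
      U ((WithLp.equiv 2 (Fin 3 → H)).symm ![DT1 (T2 h), DT2 h, 0])
        = (WithLp.equiv 2 (Fin 3 → H)).symm ![DT1 h, DT2 (T1 h), 0])
    -- K = Λ ∘ D_T
    (K : H →L[ℂ] PiLp 2 (fun _ : Fin 3 => H))
    (hK : ∀ h : H, K h = (WithLp.equiv 2 (Fin 3 → H)).symm ![DT1 (T2 h), DT2 h, 0]) :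
    adjoint T1 ∘L T1 + adjoint K ∘L adjoint U ∘L P ∘L U ∘L K = 1 ∧
    adjoint T2 ∘L T2 + adjoint K ∘L (1 - P) ∘L K = 1 :=
  special_Ando_tuple_identities_one_general T1 T2 DT1 DT2 hDT1 hDT2 hDT1sq hDT2sq P U hP hUact K hK
end

section
/- Let T1, T2 be q-commuting contractions on H and (F; Λ, P, U) a special Andô tuple for (T1, T2). Then P U Λ D_T T2 + P^⊥ Λ D_T = Λ D_T and U*(P^⊥ Λ D_T T1 + P U Λ D_T) = Λ D_T. -/
/-!
Both identities are read off coordinatewise: `U (K (T2 h))` and `K h` have the same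
`D_{T1}`-coordinate, so `P` identifies them, while `K (T1 h)` and `U (K h)` agree off the
`D_{T1}`-coordinate, so `P^⊥` identifies them; the second identity then follows from `U* U = 1`.
-/

open ContinuousLinearMap

section FirstCoordinateProjection

variable {H : Type*} [AddCommGroup H] {P : WithLp 2 (Fin 3 → H) → WithLp 2 (Fin 3 → H)}

theorem proj_eq_proj_of_apply_zero_eq
    (hP : ∀ v, P v = (WithLp.equiv 2 (Fin 3 → H)).symm ![(WithLp.equiv 2 (Fin 3 → H)) v 0, 0, 0])
    {v w : WithLp 2 (Fin 3 → H)} (h : v 0 = w 0) : P v = P w := by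
  rw [hP, hP]
  simp only [WithLp.equiv_apply, h]

theorem sub_proj_eq_sub_proj_of_apply_one_of_apply_two
    (hP : ∀ v, P v = (WithLp.equiv 2 (Fin 3 → H)).symm ![(WithLp.equiv 2 (Fin 3 → H)) v 0, 0, 0])
    {v w : WithLp 2 (Fin 3 → H)} (h₁ : v 1 = w 1) (h₂ : v 2 = w 2) :
    v - P v = w - P w := by
  rw [hP, hP]
  ext i
  simp only [WithLp.equiv_apply, WithLp.equiv_symm_apply, WithLp.ofLp_sub, Pi.sub_apply]
  fin_cases i
  · simp
  · simpa using h₁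
  · simpa using h₂

end FirstCoordinateProjection

theorem special_Ando_tuple_identities_two_general
    {H : Type*} [NormedAddCommGroup H] [InnerProductSpace ℂ H] [CompleteSpace H]
    (T1 T2 : H →L[ℂ] H)
    (DT1 DT2 : H →L[ℂ] H)
    (P U : PiLp 2 (fun _ : Fin 3 => H) →L[ℂ] PiLp 2 (fun _ : Fin 3 => H))
    (hP : ∀ v : PiLp 2 (fun _ : Fin 3 => H),
      P v = (WithLp.equiv 2 (Fin 3 → H)).symm ![(WithLp.equiv 2 (Fin 3 → H)) v 0, 0, 0])
    (hUuni : adjoint U ∘L U = 1 ∧ U ∘L adjoint U = 1)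
    (hUact : ∀ h : H,
      U ((WithLp.equiv 2 (Fin 3 → H)).symm ![DT1 (T2 h), DT2 h, 0])
        = (WithLp.equiv 2 (Fin 3 → H)).symm ![DT1 h, DT2 (T1 h), 0])
    -- K = Λ ∘ D_T
    (K : H →L[ℂ] PiLp 2 (fun _ : Fin 3 => H))
    (hK : ∀ h : H, K h = (WithLp.equiv 2 (Fin 3 → H)).symm ![DT1 (T2 h), DT2 h, 0]) :
    (∀ h : H, P (U (K (T2 h))) + (K h - P (K h)) = K h) ∧
    (∀ h : H, adjoint U ((K (T1 h) - P (K (T1 h))) + P (U (K h))) = K h) := by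
  constructor
  · intro h
    have hfirst : P (U (K (T2 h))) = P (K h) :=
      proj_eq_proj_of_apply_zero_eq hP (by rw [hK, hUact, hK]; simp)
    rw [hfirst, add_sub_cancel]
  · intro h
    have hrest : K (T1 h) - P (K (T1 h)) = U (K h) - P (U (K h)) :=
      sub_proj_eq_sub_proj_of_apply_one_of_apply_two hP
        (by rw [hK, hK, hUact]; simp) (by rw [hK, hK, hUact]; simp)
    rw [hrest, sub_add_cancel, ← comp_apply, hUuni.1, one_apply_eq_self]

/-- For a special Andô tuple `(F; Λ, P, U)` of a `q`-commuting contractive pair `(T1, T2)`,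
writing `K = Λ D_T`, one has `P U Λ D_T T2 + P^⊥ Λ D_T = Λ D_T` and
`U*(P^⊥ Λ D_T T1 + P U Λ D_T) = Λ D_T`. -/
theorem special_Ando_tuple_identities_two
    {H : Type*} [NormedAddCommGroup H] [InnerProductSpace ℂ H] [CompleteSpace H]
    (q : ℂ) (hq : ‖q‖ = 1)
    (T1 T2 : H →L[ℂ] H) (hT1 : ‖T1‖ ≤ 1) (hT2 : ‖T2‖ ≤ 1)
    (hcomm : T1 * T2 = q • (T2 * T1))
    (DT DT1 DT2 : H →L[ℂ] H)
    (hDT : DT.IsPositive) (hDT1 : DT1.IsPositive) (hDT2 : DT2.IsPositive)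
    (hDTsq : DT * DT = 1 - adjoint (T1 * T2) * (T1 * T2))
    (hDT1sq : DT1 * DT1 = 1 - adjoint T1 * T1)
    (hDT2sq : DT2 * DT2 = 1 - adjoint T2 * T2)
    (P U : PiLp 2 (fun _ : Fin 3 => H) →L[ℂ] PiLp 2 (fun _ : Fin 3 => H))
    (hP : ∀ v : PiLp 2 (fun _ : Fin 3 => H),
      P v = (WithLp.equiv 2 (Fin 3 → H)).symm ![(WithLp.equiv 2 (Fin 3 → H)) v 0, 0, 0])
    (hUuni : adjoint U ∘L U = 1 ∧ U ∘L adjoint U = 1)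
    (hUact : ∀ h : H,
      U ((WithLp.equiv 2 (Fin 3 → H)).symm ![DT1 (T2 h), DT2 h, 0])
        = (WithLp.equiv 2 (Fin 3 → H)).symm ![DT1 h, DT2 (T1 h), 0])
    -- K = Λ ∘ D_T
    (K : H →L[ℂ] PiLp 2 (fun _ : Fin 3 => H))
    (hK : ∀ h : H, K h = (WithLp.equiv 2 (Fin 3 → H)).symm ![DT1 (T2 h), DT2 h, 0]) :
    (∀ h : H, P (U (K (T2 h))) + (K h - P (K h)) = K h) ∧
    (∀ h : H, adjoint U ((K (T1 h) - P (K (T1 h))) + P (U (K h))) = K h) :=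
  special_Ando_tuple_identities_two_general T1 T2 DT1 DT2 P U hP hUuni hUact K hK
end

section
/- Let T1, T2 be q-commuting contractions on H and T = T1T2, and let (V1^S, V2^S) be the Schäffer-type pair on H ⊕ H²(F) given by V1^S = [[T1, 0], [ev0* P U Λ D_T, q M_{(P^⊥+zP)U} R_q]] and V2^S = [[T2, 0], [q̄ ev0* U* P^⊥ Λ D_T, q̄ R_{q̄} M_{U*(P+zP^⊥)}]]. Then V1^S V2^S = q V2^S V1^S, and both V1^S and V2^S are isometries; in particular every q-commuting contractive pair lifts to a q-commuting isometric pair. -/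
/-!
Both `V1ˢ V2ˢ` and `q V2ˢ V1ˢ` are the Schäffer isometry `(h, f) ↦ (T h, K h, f 0, f 1, …)` of
`T = T1 T2`: comparing Taylor coefficients, the first coefficient is `K h` by the Andô relations
`r3` resp. `r4`, and the higher ones are `f n` because `U` is unitary, `P` is a projection and the
powers of `q` and `q̄` cancel.

For the isometry, `V1ˢ` splits `U f n` into `P U f n` and `P^⊥ U f n` and places them in the
orthogonal pieces of the coefficients `n + 1` and `n`, so `‖(V1ˢ x).snd‖² = ‖P U K h‖² + ‖f‖²`,
while `‖T1 h‖² + ‖P U K h‖² = ‖h‖²` is `r1`. The same bookkeeping with `r2` works for `V2ˢ`.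
-/

open ContinuousLinearMap

theorem lp.hasSum_norm_sq {ι : Type*} {E : ι → Type*} [∀ i, NormedAddCommGroup (E i)]
    (f : lp E 2) : HasSum (fun i => ‖f i‖ ^ 2) (‖f‖ ^ 2) := by
  simpa using lp.hasSum_norm (p := 2) (by norm_num) f

theorem lp.norm_sq_eq_add_of_shift {F : Type*} [NormedAddCommGroup F]
    {f g : lp (fun _ : ℕ => F) 2} {a : ℝ} {C D : ℕ → ℝ}
    (hC : ∀ n, 0 ≤ C n) (hD : ∀ n, 0 ≤ D n) (hCD : ∀ n, C n + D n = ‖f n‖ ^ 2)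
    (h0 : ‖g 0‖ ^ 2 = a + D 0) (hsucc : ∀ n, ‖g (n + 1)‖ ^ 2 = C n + D (n + 1)) :
    ‖g‖ ^ 2 = a + ‖f‖ ^ 2 := by
  have hf : HasSum (fun n => C n + D n) (‖f‖ ^ 2) := by
    simpa only [hCD] using lp.hasSum_norm_sq f
  obtain ⟨c, hc⟩ : Summable C :=
    .of_nonneg_of_le hC (fun n => le_add_of_nonneg_right (hD n)) hf.summable
  obtain ⟨d, hd⟩ : Summable D :=
    .of_nonneg_of_le hD (fun n => le_add_of_nonneg_left (hC n)) hf.summable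
  have hd1 := (hasSum_nat_add_iff' (f := D) 1).2 hd
  rw [Finset.sum_range_one] at hd1
  have htail : HasSum (fun n => ‖g (n + 1)‖ ^ 2) (c + (d - D 0)) := by
    simpa only [hsucc] using hc.add hd1
  have hg := (hasSum_nat_add_iff (f := fun n => ‖g n‖ ^ 2) 1).1 htail
  rw [Finset.sum_range_one] at hg
  rw [(lp.hasSum_norm_sq g).unique hg, hf.unique (hc.add hd), h0]
  ring

section Projection

variable {𝕜 E : Type*} [RCLike 𝕜] [NormedAddCommGroup E] [InnerProductSpace 𝕜 E]
  [CompleteSpace E] {P : E →L[𝕜] E}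

theorem IsStarProjection.norm_add_sq_of_apply_eq_self_of_apply_eq_zero
    (hP : IsStarProjection P) {u v : E} (hu : P u = u) (hv : P v = 0) :
    ‖u + v‖ ^ 2 = ‖u‖ ^ 2 + ‖v‖ ^ 2 := by
  simp only [sq]
  refine norm_add_sq_eq_norm_sq_add_norm_sq_of_inner_eq_zero (𝕜 := 𝕜) u v ?_
  rw [← hu, ← isSelfAdjoint_iff'.mp hP.isSelfAdjoint, adjoint_inner_left, hv, inner_zero_right]

theorem IsStarProjection.apply_apply (hP : IsStarProjection P) (v : E) : P (P v) = P v :=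
  congr($(hP.isIdempotentElem.eq) v)

theorem IsStarProjection.apply_sub_apply (hP : IsStarProjection P) (v : E) : P (v - P v) = 0 := by
  rw [map_sub, hP.apply_apply, sub_self]

theorem IsStarProjection.norm_sq_apply_add_norm_sq_sub_apply (hP : IsStarProjection P) (v : E) :
    ‖P v‖ ^ 2 + ‖v - P v‖ ^ 2 = ‖v‖ ^ 2 := by
  rw [← hP.norm_add_sq_of_apply_eq_self_of_apply_eq_zero (hP.apply_apply v)
    (hP.apply_sub_apply v), add_sub_cancel]

theorem IsStarProjection.adjoint_comp_self_comp {G : Type*} [NormedAddCommGroup G]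
    [InnerProductSpace 𝕜 G] [CompleteSpace G] (hP : IsStarProjection P) (B : G →L[𝕜] E) :
    adjoint (P ∘L B) ∘L (P ∘L B) = adjoint B ∘L P ∘L B := by
  rw [adjoint_comp, isSelfAdjoint_iff'.mp hP.isSelfAdjoint, comp_assoc, ← comp_assoc P P,
    ← mul_def, hP.isIdempotentElem.eq]

end Projection

theorem norm_sq_add_norm_sq_of_adjoint_comp_add {𝕜 E G G' : Type*} [RCLike 𝕜]
    [NormedAddCommGroup E] [InnerProductSpace 𝕜 E] [CompleteSpace E]
    [NormedAddCommGroup G] [InnerProductSpace 𝕜 G] [CompleteSpace G]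
    [NormedAddCommGroup G'] [InnerProductSpace 𝕜 G'] [CompleteSpace G']
    {A : E →L[𝕜] G} {B : E →L[𝕜] G'} (h : adjoint A ∘L A + adjoint B ∘L B = 1) (x : E) :
    ‖A x‖ ^ 2 + ‖B x‖ ^ 2 = ‖x‖ ^ 2 := by
  rw [apply_norm_sq_eq_inner_adjoint_left, apply_norm_sq_eq_inner_adjoint_left, ← map_add,
    ← inner_add_left, ← add_apply, h, one_apply_eq_self, ← inner_self_eq_norm_sq (𝕜 := 𝕜)]

theorem mul_conj_of_norm_eq_one {q : ℂ} (hq : ‖q‖ = 1) : q * starRingEnd ℂ q = 1 := by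
  rw [RCLike.mul_conj, hq]
  simp

theorem smul_conj_pow_smul {E : Type*} [AddCommGroup E] [Module ℂ E] {q : ℂ} (hq : ‖q‖ = 1)
    (k : ℕ) (v : E) : q ^ k • (starRingEnd ℂ q) ^ k • v = v := by
  rw [smul_smul, ← mul_pow, mul_conj_of_norm_eq_one hq, one_pow, one_smul]

theorem smul_conj_smul {E : Type*} [AddCommGroup E] [Module ℂ E] {q : ℂ} (hq : ‖q‖ = 1)
    (v : E) : q • starRingEnd ℂ q • v = v := by
  simpa using smul_conj_pow_smul hq 1 v

/-- `H ⊕ H²(F)`, with `H²(F)` realized through Taylor coefficients as `ℓ²(ℕ, F)`. -/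
abbrev SchafferSpace (H F : Type*) [NormedAddCommGroup F] :=
  WithLp 2 (H × lp (fun _ : ℕ => F) 2)

section Schaffer

variable {H F : Type*} [NormedAddCommGroup H] [InnerProductSpace ℂ H]
  [NormedAddCommGroup F] [InnerProductSpace ℂ F]

/-- `y` is the image of `x` under the Schäffer isometry `[[T, 0], [ev₀* K, M_z]]` of `T`. -/
def IsSchafferImage (T : H →L[ℂ] H) (K : H →L[ℂ] F) (x y : SchafferSpace H F) : Prop :=
  y.fst = T x.fst ∧ y.snd 0 = K x.fst ∧ ∀ n, y.snd (n + 1) = x.snd n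

theorem IsSchafferImage.unique {T : H →L[ℂ] H} {K : H →L[ℂ] F} {x y z : SchafferSpace H F}
    (hy : IsSchafferImage T K x y) (hz : IsSchafferImage T K x z) : y = z := by
  obtain ⟨hy1, hy0, hys⟩ := hy
  obtain ⟨hz1, hz0, hzs⟩ := hz
  refine (WithLp.ext_iff 2).2 (Prod.ext (hy1.trans hz1.symm) (lp.ext (funext fun n => ?_)))
  cases n with
  | zero => exact hy0.trans hz0.symm
  | succ n => exact (hys n).trans (hzs n).symm

variable [CompleteSpace F]

/-- `V` acts on Taylor coefficients as `[[T1, 0], [ev₀* P U K, q M_{(P^⊥+zP)U} R_q]]`. -/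
def IsSchafferV1 (q : ℂ) (T1 : H →L[ℂ] H) (P U : F →L[ℂ] F) (K : H →L[ℂ] F)
    (V : SchafferSpace H F → SchafferSpace H F) : Prop :=
  ∀ x, (V x).fst = T1 x.fst ∧
    (V x).snd 0 = P (U (K x.fst)) + q • (U (x.snd 0) - P (U (x.snd 0))) ∧
    ∀ n : ℕ, (V x).snd (n + 1)
      = q ^ (n + 2) • (U (x.snd (n + 1)) - P (U (x.snd (n + 1)))) + q ^ (n + 1) • P (U (x.snd n))

/-- `V` acts on Taylor coefficients as `[[T2, 0], [q̄ ev₀* U* P^⊥ K, q̄ R_{q̄} M_{U*(P+zP^⊥)}]]`. -/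
def IsSchafferV2 (q : ℂ) (T2 : H →L[ℂ] H) (P U : F →L[ℂ] F) (K : H →L[ℂ] F)
    (V : SchafferSpace H F → SchafferSpace H F) : Prop :=
  ∀ x, (V x).fst = T2 x.fst ∧
    (V x).snd 0 = starRingEnd ℂ q • adjoint U (K x.fst - P (K x.fst))
      + starRingEnd ℂ q • adjoint U (P (x.snd 0)) ∧
    ∀ n : ℕ, (V x).snd (n + 1)
      = starRingEnd ℂ q ^ (n + 2)
        • (adjoint U (P (x.snd (n + 1))) + adjoint U (x.snd n - P (x.snd n)))

variable {q : ℂ} {T1 T2 : H →L[ℂ] H} {P U : F →L[ℂ] F} {K : H →L[ℂ] F}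
  {V1 V2 : SchafferSpace H F → SchafferSpace H F}

theorem IsSchafferV1.isSchafferImage_comp (hV1 : IsSchafferV1 q T1 P U K V1)
    (hV2 : IsSchafferV2 q T2 P U K V2) (hq : ‖q‖ = 1) (hP : IsStarProjection P)
    (hU : U ∘L adjoint U = 1) (r3 : ∀ h : H, P (U (K (T2 h))) + (K h - P (K h)) = K h)
    (x : SchafferSpace H F) : IsSchafferImage (T1 * T2) K x (V1 (V2 x)) := by
  have hUU : ∀ v, U (adjoint U v) = v := fun v => congr($hU v)
  obtain ⟨a1, a0, as⟩ := hV2 x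
  obtain ⟨b1, b0, bs⟩ := hV1 (V2 x)
  set c := starRingEnd ℂ q
  set f := x.snd
  set g := (V2 x).snd
  have hPUg : ∀ n, P (U (g n)) = c ^ (n + 1) • P (f n) := by
    rintro (_ | n)
    · simp [a0, hUU, hP.apply_apply, hP.apply_sub_apply]
    · simp [as n, hUU, hP.apply_apply, hP.apply_sub_apply]
  have hQUg : ∀ n, U (g (n + 1)) - P (U (g (n + 1))) = c ^ (n + 2) • (f n - P (f n)) := by
    intro n
    simp [as n, hUU, hP.apply_apply, hP.apply_sub_apply]
  have hQUg0 : U (g 0) - P (U (g 0)) = c • (K x.fst - P (K x.fst)) := by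
    simp [a0, hUU, hP.apply_apply, hP.apply_sub_apply]
  refine ⟨by rw [b1, a1]; rfl, ?_, fun n => ?_⟩
  · rw [b0, a1, hQUg0, smul_conj_smul hq]
    exact r3 x.fst
  · rw [bs n, hQUg, hPUg, smul_conj_pow_smul hq, smul_conj_pow_smul hq, sub_add_cancel]

theorem IsSchafferV2.isSchafferImage_smul_comp (hV2 : IsSchafferV2 q T2 P U K V2)
    (hV1 : IsSchafferV1 q T1 P U K V1) (hq : ‖q‖ = 1) (hP : IsStarProjection P)
    (hU : adjoint U ∘L U = 1)
    (r4 : ∀ h : H, adjoint U ((K (T1 h) - P (K (T1 h))) + P (U (K h))) = K h)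
    (x : SchafferSpace H F) : IsSchafferImage (q • (T2 * T1)) K x (q • V2 (V1 x)) := by
  have hUU : ∀ v, adjoint U (U v) = v := fun v => congr($hU v)
  obtain ⟨a1, a0, as⟩ := hV1 x
  obtain ⟨b1, b0, bs⟩ := hV2 (V1 x)
  set c := starRingEnd ℂ q
  set f := x.snd
  set g := (V1 x).snd
  have hPg : ∀ n, P (g (n + 1)) = q ^ (n + 1) • P (U (f n)) := by
    intro n
    simp [as n, hP.apply_apply, hP.apply_sub_apply]
  have hQg : ∀ n, g n - P (g n) = q ^ (n + 1) • (U (f n) - P (U (f n))) := by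
    rintro (_ | n)
    · simp [a0, hP.apply_apply, hP.apply_sub_apply]
    · simp [as n, hP.apply_apply, hP.apply_sub_apply]
  have hPg0 : P (g 0) = P (U (K x.fst)) := by
    simp [a0, hP.apply_apply, hP.apply_sub_apply]
  refine ⟨by rw [WithLp.smul_fst, b1, a1]; rfl, ?_, fun n => ?_⟩
  · simp only [WithLp.smul_snd, lp.coeFn_smul, Pi.smul_apply]
    rw [b0, a1, hPg0, ← smul_add, ← map_add, r4, smul_conj_smul hq]
  · simp only [WithLp.smul_snd, lp.coeFn_smul, Pi.smul_apply]
    rw [bs n, hPg, hQg, ← map_add, ← smul_add, add_sub_cancel, map_smul, hUU, smul_smul,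
      smul_smul, show q * c ^ (n + 2) * q ^ (n + 1) = (q * c) ^ (n + 2) by ring,
      mul_conj_of_norm_eq_one hq, one_pow, one_smul]

variable [CompleteSpace H]

theorem IsSchafferV1.norm_map (hV : IsSchafferV1 q T1 P U K V1) (hq : ‖q‖ = 1)
    (hP : IsStarProjection P) (hU : adjoint U ∘L U = 1)
    (r1 : adjoint T1 ∘L T1 + adjoint K ∘L adjoint U ∘L P ∘L U ∘L K = 1) (x : SchafferSpace H F) :
    ‖V1 x‖ = ‖x‖ := by
  have hUn := (norm_map_iff_adjoint_comp_self U).2 hU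
  obtain ⟨h1, h0, hs⟩ := hV x
  have hfst : ‖T1 x.fst‖ ^ 2 + ‖P (U (K x.fst))‖ ^ 2 = ‖x.fst‖ ^ 2 := by
    refine norm_sq_add_norm_sq_of_adjoint_comp_add (B := P ∘L U ∘L K) ?_ x.fst
    rwa [hP.adjoint_comp_self_comp, adjoint_comp, comp_assoc]
  have hsnd : ‖(V1 x).snd‖ ^ 2 = ‖P (U (K x.fst))‖ ^ 2 + ‖x.snd‖ ^ 2 := by
    refine lp.norm_sq_eq_add_of_shift (C := fun n => ‖P (U (x.snd n))‖ ^ 2)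
      (D := fun n => ‖U (x.snd n) - P (U (x.snd n))‖ ^ 2) (fun _ => by positivity)
      (fun _ => by positivity) (fun n => by rw [hP.norm_sq_apply_add_norm_sq_sub_apply, hUn])
      ?_ (fun n => ?_)
    · rw [h0, hP.norm_add_sq_of_apply_eq_self_of_apply_eq_zero (hP.apply_apply _)
        (by rw [map_smul, hP.apply_sub_apply, smul_zero]), norm_smul, hq, one_mul]
    · rw [hs n, add_comm (q ^ (n + 2) • _), hP.norm_add_sq_of_apply_eq_self_of_apply_eq_zero
        (by rw [map_smul, hP.apply_apply]) (by rw [map_smul, hP.apply_sub_apply, smul_zero])]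
      simp only [norm_smul, norm_pow, hq, one_pow, one_mul]
  rw [← sq_eq_sq₀ (norm_nonneg _) (norm_nonneg _), WithLp.prod_norm_sq_eq_of_L2,
    WithLp.prod_norm_sq_eq_of_L2, h1, hsnd, ← hfst]
  ring

theorem IsSchafferV2.norm_map (hV : IsSchafferV2 q T2 P U K V2) (hq : ‖q‖ = 1)
    (hP : IsStarProjection P) (hU : U ∘L adjoint U = 1)
    (r2 : adjoint T2 ∘L T2 + adjoint K ∘L (1 - P) ∘L K = 1) (x : SchafferSpace H F) :
    ‖V2 x‖ = ‖x‖ := by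
  have hUn := (norm_map_iff_adjoint_comp_self (adjoint U)).2 (by rwa [adjoint_adjoint])
  have hqn : ‖starRingEnd ℂ q‖ = 1 := by rwa [RCLike.norm_conj]
  obtain ⟨h1, h0, hs⟩ := hV x
  have hfst : ‖T2 x.fst‖ ^ 2 + ‖K x.fst - P (K x.fst)‖ ^ 2 = ‖x.fst‖ ^ 2 :=
    norm_sq_add_norm_sq_of_adjoint_comp_add (A := T2) (B := (1 - P) ∘L K)
      (by rwa [hP.one_sub.adjoint_comp_self_comp]) x.fst
  have hsnd : ‖(V2 x).snd‖ ^ 2 = ‖K x.fst - P (K x.fst)‖ ^ 2 + ‖x.snd‖ ^ 2 := by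
    refine lp.norm_sq_eq_add_of_shift (C := fun n => ‖x.snd n - P (x.snd n)‖ ^ 2)
      (D := fun n => ‖P (x.snd n)‖ ^ 2) (fun _ => by positivity) (fun _ => by positivity)
      (fun n => by rw [add_comm, hP.norm_sq_apply_add_norm_sq_sub_apply]) ?_ (fun n => ?_)
    · rw [h0, ← smul_add, ← map_add, norm_smul, hqn, one_mul, hUn, add_comm,
        hP.norm_add_sq_of_apply_eq_self_of_apply_eq_zero (hP.apply_apply _) (hP.apply_sub_apply _),
        add_comm]
    · rw [hs n, ← map_add, norm_smul, norm_pow, hqn, one_pow, one_mul, hUn,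
        hP.norm_add_sq_of_apply_eq_self_of_apply_eq_zero (hP.apply_apply _) (hP.apply_sub_apply _),
        add_comm]
  rw [← sq_eq_sq₀ (norm_nonneg _) (norm_nonneg _), WithLp.prod_norm_sq_eq_of_L2,
    WithLp.prod_norm_sq_eq_of_L2, h1, hsnd, ← hfst]
  ring

end Schaffer

theorem schaffer_lift_isometric_qcommuting_general
    {H : Type*} [NormedAddCommGroup H] [InnerProductSpace ℂ H] [CompleteSpace H]
    {F : Type*} [NormedAddCommGroup F] [InnerProductSpace ℂ F] [CompleteSpace F]
    (q : ℂ) (hq : ‖q‖ = 1)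
    (T1 T2 : H →L[ℂ] H)
    (hcomm : T1 * T2 = q • (T2 * T1))
    -- the special Andô tuple data: a projection P, a unitary U on F, and K = Λ D_T
    (P U : F →L[ℂ] F)
    (hPproj : P ∘L P = P) (hPsa : IsSelfAdjoint P)
    (hUuni : adjoint U ∘L U = 1 ∧ U ∘L adjoint U = 1)
    (K : H →L[ℂ] F)
    -- the special Andô tuple relations
    (r1 : adjoint T1 ∘L T1 + adjoint K ∘L adjoint U ∘L P ∘L U ∘L K = 1)
    (r2 : adjoint T2 ∘L T2 + adjoint K ∘L (1 - P) ∘L K = 1)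
    (r3 : ∀ h : H, P (U (K (T2 h))) + (K h - P (K h)) = K h)
    (r4 : ∀ h : H, adjoint U ((K (T1 h) - P (K (T1 h))) + P (U (K h))) = K h)
    -- the Schäffer operators on H ⊕₂ ℓ²(ℕ, F), specified blockwise and coefficientwise
    (V1 V2 : WithLp 2 (H × lp (fun _ : ℕ => F) 2) →L[ℂ] WithLp 2 (H × lp (fun _ : ℕ => F) 2))
    (hV1 : ∀ (h : H) (f : lp (fun _ : ℕ => F) 2),
      (WithLp.equiv 2 _ (V1 ((WithLp.equiv 2 _).symm (h, f)))).1 = T1 h ∧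
      ((WithLp.equiv 2 _ (V1 ((WithLp.equiv 2 _).symm (h, f)))).2) 0
        = P (U (K h)) + q • (U (f 0) - P (U (f 0))) ∧
      ∀ n : ℕ, ((WithLp.equiv 2 _ (V1 ((WithLp.equiv 2 _).symm (h, f)))).2) (n + 1)
        = q ^ (n + 2) • (U (f (n + 1)) - P (U (f (n + 1)))) + q ^ (n + 1) • P (U (f n)))
    (hV2 : ∀ (h : H) (f : lp (fun _ : ℕ => F) 2),
      (WithLp.equiv 2 _ (V2 ((WithLp.equiv 2 _).symm (h, f)))).1 = T2 h ∧
      ((WithLp.equiv 2 _ (V2 ((WithLp.equiv 2 _).symm (h, f)))).2) 0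
        = (starRingEnd ℂ q) • adjoint U (K h - P (K h))
          + (starRingEnd ℂ q) • adjoint U (P (f 0)) ∧
      ∀ n : ℕ, ((WithLp.equiv 2 _ (V2 ((WithLp.equiv 2 _).symm (h, f)))).2) (n + 1)
        = (starRingEnd ℂ q) ^ (n + 2)
            • (adjoint U (P (f (n + 1))) + adjoint U (f n - P (f n)))) :
    V1 ∘L V2 = q • (V2 ∘L V1) ∧
    (∀ x, ‖V1 x‖ = ‖x‖) ∧
    (∀ x, ‖V2 x‖ = ‖x‖) := by
  obtain ⟨hU1, hU2⟩ := hUuni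
  have hP : IsStarProjection P := ⟨hPproj, hPsa⟩
  have hV1' : IsSchafferV1 q T1 P U K V1 := fun x => hV1 x.fst x.snd
  have hV2' : IsSchafferV2 q T2 P U K V2 := fun x => hV2 x.fst x.snd
  refine ⟨ext fun x => ?_, hV1'.norm_map hq hP hU1 r1, hV2'.norm_map hq hP hU2 r2⟩
  exact (hV1'.isSchafferImage_comp hV2' hq hP hU2 r3 x).unique
    (hcomm ▸ hV2'.isSchafferImage_smul_comp hV1' hq hP hU1 r4 x)

/-- The Schäffer-type pair `(V1ˢ, V2ˢ)` on `H ⊕ H²(F)` built from a special Andô tuple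
`(F; Λ, P, U)` of a `q`-commuting contractive pair `(T1, T2)` (with `K = Λ D_T`, and with
`H²(F)` realized as `ℓ²(ℕ, F)` of Taylor coefficients, `H ⊕ H²(F)` as an `ℓ²`-direct sum)
is a `q`-commuting pair of isometries lifting `(T1, T2)`:
`V1ˢ V2ˢ = q V2ˢ V1ˢ` and both `V1ˢ, V2ˢ` are isometries.
Here `V1ˢ = [[T1, 0], [ev₀* P U Λ D_T, q M_{(P^⊥+zP)U} R_q]]` and
`V2ˢ = [[T2, 0], [q̄ ev₀* U* P^⊥ Λ D_T, q̄ R_{q̄} M_{U*(P+zP^⊥)}]]`, specified below through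
their Taylor coefficients. -/
theorem schaffer_lift_isometric_qcommuting
    {H : Type*} [NormedAddCommGroup H] [InnerProductSpace ℂ H] [CompleteSpace H]
    {F : Type*} [NormedAddCommGroup F] [InnerProductSpace ℂ F] [CompleteSpace F]
    (q : ℂ) (hq : ‖q‖ = 1)
    (T1 T2 : H →L[ℂ] H) (hT1 : ‖T1‖ ≤ 1) (hT2 : ‖T2‖ ≤ 1)
    (hcomm : T1 * T2 = q • (T2 * T1))
    -- the special Andô tuple data: a projection P, a unitary U on F, and K = Λ D_T
    (P U : F →L[ℂ] F)
    (hPproj : P ∘L P = P) (hPsa : IsSelfAdjoint P)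
    (hUuni : adjoint U ∘L U = 1 ∧ U ∘L adjoint U = 1)
    (K : H →L[ℂ] F)
    (hKiso : adjoint K ∘L K = 1 - adjoint (T1 * T2) ∘L (T1 * T2))
    -- the special Andô tuple relations
    (r1 : adjoint T1 ∘L T1 + adjoint K ∘L adjoint U ∘L P ∘L U ∘L K = 1)
    (r2 : adjoint T2 ∘L T2 + adjoint K ∘L (1 - P) ∘L K = 1)
    (r3 : ∀ h : H, P (U (K (T2 h))) + (K h - P (K h)) = K h)
    (r4 : ∀ h : H, adjoint U ((K (T1 h) - P (K (T1 h))) + P (U (K h))) = K h)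
    -- the Schäffer operators on H ⊕₂ ℓ²(ℕ, F), specified blockwise and coefficientwise
    (V1 V2 : WithLp 2 (H × lp (fun _ : ℕ => F) 2) →L[ℂ] WithLp 2 (H × lp (fun _ : ℕ => F) 2))
    (hV1 : ∀ (h : H) (f : lp (fun _ : ℕ => F) 2),
      (WithLp.equiv 2 _ (V1 ((WithLp.equiv 2 _).symm (h, f)))).1 = T1 h ∧
      ((WithLp.equiv 2 _ (V1 ((WithLp.equiv 2 _).symm (h, f)))).2) 0
        = P (U (K h)) + q • (U (f 0) - P (U (f 0))) ∧
      ∀ n : ℕ, ((WithLp.equiv 2 _ (V1 ((WithLp.equiv 2 _).symm (h, f)))).2) (n + 1)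
        = q ^ (n + 2) • (U (f (n + 1)) - P (U (f (n + 1)))) + q ^ (n + 1) • P (U (f n)))
    (hV2 : ∀ (h : H) (f : lp (fun _ : ℕ => F) 2),
      (WithLp.equiv 2 _ (V2 ((WithLp.equiv 2 _).symm (h, f)))).1 = T2 h ∧
      ((WithLp.equiv 2 _ (V2 ((WithLp.equiv 2 _).symm (h, f)))).2) 0
        = (starRingEnd ℂ q) • adjoint U (K h - P (K h))
          + (starRingEnd ℂ q) • adjoint U (P (f 0)) ∧
      ∀ n : ℕ, ((WithLp.equiv 2 _ (V2 ((WithLp.equiv 2 _).symm (h, f)))).2) (n + 1)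
        = (starRingEnd ℂ q) ^ (n + 2)
            • (adjoint U (P (f (n + 1))) + adjoint U (f n - P (f n)))) :
    V1 ∘L V2 = q • (V2 ∘L V1) ∧
    (∀ x, ‖V1 x‖ = ‖x‖) ∧
    (∀ x, ‖V2 x‖ = ‖x‖) :=
  schaffer_lift_isometric_qcommuting_general q hq T1 T2 hcomm P U hPproj hPsa hUuni K r1 r2 r3 r4 V1
    V2 hV1 hV2
end

section
/- Let T1, T2 be q-commuting contractions on H with T = T1T2, let (G1, G2) be the fundamental operators of (T1*, T2*), and (W1, W2) the canonical q-commuting unitary pair on Q_{T*}. Then the triple (𝕎1, 𝕎2, V_D) on H²(D_{T*}) ⊕ Q_{T*}, where 𝕎1 = M_{G1*+zG2} R_q ⊕ W1, 𝕎2 = R_{q̄} M_{G2*+zG1} ⊕ W2, and V_D = M_z ⊕ W_D, satisfies: 𝕎1 V_D = q V_D 𝕎1, 𝕎2 V_D = q̄ V_D 𝕎2, and 𝕎1 = q̄ 𝕎2* V_D. -/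
/-!
Every operator involved is block diagonal on `H²(𝒟_{T*}) ⊕ 𝒬_{T*}`, so the three identities
can be checked blockwise. On `𝒬_{T*}` they are ring identities for the pair `W1, W2`: from
`W_D = W1 W2 = q W2 W1` and `W2* W2 = 1` one gets `W1 W_D = q W_D W1`, `W2 W_D = q̄ W_D W2` and
`W2* W_D = q W1`. On `H²` the first two follow from comparing Taylor coefficients, the rotation
`R_q` contributing the factor `q` against the shift. For the third, both
`⟨M_{G1*+zG2} R_q f, g⟩` and `q ⟨M_z f, R_q̄ M_{G2*+zG1} g⟩` are series whose terms regroup into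
`∑ q̄ⁿ ⟨G1* fₙ, gₙ⟩ + ∑ q̄ⁿ ⟨G2 fₙ, gₙ₊₁⟩`, once with an index shift, using `q q̄ = 1`.
-/

open ContinuousLinearMap

section ProdMap

variable {𝕜 E F : Type*} [RCLike 𝕜]

/-- `X` acts on the `ℓ²`-direct sum `E ⊕ F` as the block-diagonal operator `A ⊕ B`. -/
def IsProdMap [NormedAddCommGroup E] [NormedSpace 𝕜 E] [NormedAddCommGroup F] [NormedSpace 𝕜 F]
    (X : WithLp 2 (E × F) →L[𝕜] WithLp 2 (E × F)) (A : E →L[𝕜] E) (B : F →L[𝕜] F) : Prop :=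
  ∀ (f : E) (y : F), WithLp.equiv 2 _ (X ((WithLp.equiv 2 _).symm (f, y))) = (A f, B y)

namespace IsProdMap

section Normed

variable [NormedAddCommGroup E] [NormedSpace 𝕜 E] [NormedAddCommGroup F] [NormedSpace 𝕜 F]
  {X Y : WithLp 2 (E × F) →L[𝕜] WithLp 2 (E × F)} {A C : E →L[𝕜] E} {B D : F →L[𝕜] F}

theorem apply (hX : IsProdMap X A B) (x : WithLp 2 (E × F)) :
    X x = WithLp.toLp 2 (A x.ofLp.1, B x.ofLp.2) :=
  congrArg (WithLp.toLp 2) (hX x.ofLp.1 x.ofLp.2)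

theorem unique (hX : IsProdMap X A B) (hY : IsProdMap Y A B) : X = Y := by
  ext x
  rw [hX.apply, hY.apply]

theorem comp (hX : IsProdMap X A B) (hY : IsProdMap Y C D) :
    IsProdMap (X ∘L Y) (A ∘L C) (B ∘L D) := fun f y => by
  simp only [coe_comp, Function.comp_apply, WithLp.equiv_apply, WithLp.equiv_symm_apply,
    hX.apply, hY.apply]

theorem smul (hX : IsProdMap X A B) (c : 𝕜) : IsProdMap (c • X) (c • A) (c • B) := fun f y => by
  simp only [smul_apply, WithLp.equiv_apply, WithLp.equiv_symm_apply, hX.apply]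
  rfl

end Normed

theorem adjoint [NormedAddCommGroup E] [InnerProductSpace 𝕜 E] [CompleteSpace E]
    [NormedAddCommGroup F] [InnerProductSpace 𝕜 F] [CompleteSpace F]
    {X : WithLp 2 (E × F) →L[𝕜] WithLp 2 (E × F)} {A : E →L[𝕜] E} {B : F →L[𝕜] F}
    (hX : IsProdMap X A B) : IsProdMap (ContinuousLinearMap.adjoint X)
      (ContinuousLinearMap.adjoint A) (ContinuousLinearMap.adjoint B) := fun f y => by
  suffices h : ContinuousLinearMap.adjoint X (WithLp.toLp 2 (f, y)) =
      WithLp.toLp 2 (ContinuousLinearMap.adjoint A f, ContinuousLinearMap.adjoint B y) from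
    congrArg WithLp.ofLp h
  refine ext_inner_right 𝕜 fun z => ?_
  rw [adjoint_inner_left, hX.apply, WithLp.prod_inner_apply, WithLp.prod_inner_apply]
  simp only [adjoint_inner_left]

end IsProdMap

end ProdMap

theorem ContinuousLinearMap.eq_conj_smul_adjoint_comp_of_inner {𝕜 E F G : Type*} [RCLike 𝕜]
    [NormedAddCommGroup E] [InnerProductSpace 𝕜 E]
    [NormedAddCommGroup F] [InnerProductSpace 𝕜 F] [CompleteSpace F]
    [NormedAddCommGroup G] [InnerProductSpace 𝕜 G] [CompleteSpace G]
    {X : E →L[𝕜] G} {Y : G →L[𝕜] F} {Z : E →L[𝕜] F} {c : 𝕜}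
    (h : ∀ x z, inner 𝕜 (X x) z = c * inner 𝕜 (Z x) (Y z)) :
    X = starRingEnd 𝕜 c • (ContinuousLinearMap.adjoint Y ∘L Z) := by
  ext x
  refine ext_inner_right 𝕜 fun z => ?_
  rw [smul_apply, inner_smul_left, RCLike.conj_conj, comp_apply, adjoint_inner_left, h]

section QCommuting

variable {𝕜 R : Type*} [CommSemiring 𝕜] [Semiring R] [Algebra 𝕜 R] {a b u : R} {c d : 𝕜}

theorem mul_mul_eq_smul_of_mul_eq_smul_left (h : a * b = c • (b * a)) :
    a * (a * b) = c • (a * b * a) := by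
  rw [mul_assoc, ← mul_smul_comm, ← h]

theorem mul_mul_eq_smul_of_mul_eq_smul_right (hdc : d * c = 1) (h : a * b = c • (b * a)) :
    b * (a * b) = d • (a * b * b) := by
  have hba : b * a = d • (a * b) := by rw [h, smul_smul, hdc, one_smul]
  rw [← mul_assoc, hba, smul_mul_assoc]

theorem eq_smul_mul_mul_of_mul_eq_smul (hdc : d * c = 1) (hu : u * b = 1)
    (h : a * b = c • (b * a)) : a = d • (u * (a * b)) := by
  rw [h, mul_smul_comm, ← mul_assoc, hu, one_mul, smul_smul, hdc, one_smul]

end QCommuting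

theorem HasSum.of_zero_of_succ {α : Type*} [AddCommGroup α] [TopologicalSpace α]
    [IsTopologicalAddGroup α] {u b : ℕ → α} {B : α} (hb : HasSum b B) (h0 : u 0 = 0)
    (hsucc : ∀ n, u (n + 1) = b n) : HasSum u B := by
  have hu : HasSum (fun n => u (n + 1)) B := by simpa only [hsucc] using hb
  simpa [h0] using (hasSum_nat_add_iff 1).1 hu

section ShiftModel

variable {E : Type*} [NormedAddCommGroup E]

theorem lp.summable_norm_mul_norm_add (f g : lp (fun _ : ℕ => E) 2) (k : ℕ) :
    Summable fun n => ‖f n‖ * ‖g (n + k)‖ := by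
  have hsq : ∀ h : lp (fun _ : ℕ => E) 2, Summable fun n => ‖h n‖ ^ 2 := fun h => by
    simpa using (lp.memℓp h).summable (by norm_num)
  refine Summable.of_nonneg_of_le (fun n => by positivity) (fun n => ?_)
    ((hsq f).add ((summable_nat_add_iff k).2 (hsq g)))
  nlinarith [sq_nonneg (‖f n‖ - ‖g (n + k)‖), norm_nonneg (f n), norm_nonneg (g (n + k))]

variable [NormedSpace ℂ E] (S A : lp (fun _ : ℕ => E) 2 →L[ℂ] lp (fun _ : ℕ => E) 2)
  (X Y : E →L[ℂ] E) (c : ℂ)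

/-- `S` is the shift `M_z` on `H²(E)`, realised as `ℓ²(ℕ, E)` of Taylor coefficients. -/
def IsShift : Prop :=
  ∀ f : lp (fun _ : ℕ => E) 2, S f 0 = 0 ∧ ∀ n : ℕ, S f (n + 1) = f n

/-- `A = M_{X + zY} R_c`, where `R_c` is the rotation `f(z) ↦ f(cz)`. -/
def IsMulRotation : Prop :=
  ∀ f : lp (fun _ : ℕ => E) 2, A f 0 = X (f 0) ∧
    ∀ n : ℕ, A f (n + 1) = c ^ (n + 1) • X (f (n + 1)) + c ^ n • Y (f n)

/-- `A = R_c M_{X + zY}`. -/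
def IsRotationMul : Prop :=
  ∀ f : lp (fun _ : ℕ => E) 2, A f 0 = X (f 0) ∧
    ∀ n : ℕ, A f (n + 1) = c ^ (n + 1) • (X (f (n + 1)) + Y (f n))

variable {S A X Y c}

theorem IsShift.comp_eq_smul_comp_of_isMulRotation (hS : IsShift S)
    (hA : IsMulRotation A X Y c) :
    A ∘L S = c • (S ∘L A) := by
  ext f : 1
  refine lp.ext (funext fun n => ?_)
  simp only [comp_apply, smul_apply, lp.coeFn_smul, Pi.smul_apply]
  rcases n with _ | _ | n
  · rw [(hA _).1, (hS f).1, (hS (A f)).1, map_zero, smul_zero]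
  · rw [(hA _).2, (hS f).2, (hS f).1, (hS (A f)).2, (hA f).1, map_zero, smul_zero,
      add_zero, pow_one]
  · rw [(hA _).2, (hS f).2, (hS f).2, (hS (A f)).2, (hA f).2, smul_add, smul_smul,
      smul_smul, ← pow_succ', ← pow_succ']

theorem IsShift.comp_eq_smul_comp_of_isRotationMul (hS : IsShift S)
    (hA : IsRotationMul A X Y c) :
    A ∘L S = c • (S ∘L A) := by
  ext f : 1
  refine lp.ext (funext fun n => ?_)
  simp only [comp_apply, smul_apply, lp.coeFn_smul, Pi.smul_apply]
  rcases n with _ | _ | n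
  · rw [(hA _).1, (hS f).1, (hS (A f)).1, map_zero, smul_zero]
  · rw [(hA _).2, (hS f).2, (hS f).1, (hS (A f)).2, (hA f).1, map_zero, add_zero, pow_one]
  · rw [(hA _).2, (hS f).2, (hS f).2, (hS (A f)).2, (hA f).2, smul_smul, ← pow_succ']

theorem norm_pow_mul_inner_le {F : Type*} [NormedAddCommGroup F] [InnerProductSpace ℂ F]
    (hc : ‖c‖ = 1) (n : ℕ) (Z : E →L[ℂ] F) (x : E) (y : F) :
    ‖c ^ n * inner ℂ (Z x) y‖ ≤ ‖Z‖ * (‖x‖ * ‖y‖) := by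
  rw [norm_mul, norm_pow, hc, one_pow, one_mul, ← mul_assoc]
  exact (norm_inner_le_norm _ _).trans
    (mul_le_mul_of_nonneg_right (Z.le_opNorm x) (norm_nonneg _))

end ShiftModel

section ShiftModelInner

variable {E : Type*} [NormedAddCommGroup E] [InnerProductSpace ℂ E] [CompleteSpace E]
  {S A1 A2 : lp (fun _ : ℕ => E) 2 →L[ℂ] lp (fun _ : ℕ => E) 2} {G1 G2 : E →L[ℂ] E} {c : ℂ}

theorem IsShift.inner_mulRotation_eq_mul_inner_rotationMul (hc : ‖c‖ = 1) (hS : IsShift S)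
    (hA1 : IsMulRotation A1 (adjoint G1) G2 c)
    (hA2 : IsRotationMul A2 (adjoint G2) G1 (starRingEnd ℂ c))
    (f g : lp (fun _ : ℕ => E) 2) :
    inner ℂ (A1 f) g = c * inner ℂ (S f) (A2 g) := by
  have hcc : c * starRingEnd ℂ c = 1 := by
    rw [Complex.mul_conj', hc, Complex.ofReal_one, one_pow]
  have hc' : ‖starRingEnd ℂ c‖ = 1 := by rwa [RCLike.norm_conj]
  set a : ℕ → ℂ := fun n => starRingEnd ℂ c ^ n * inner ℂ (adjoint G1 (f n)) (g n)
  set b : ℕ → ℂ := fun n => starRingEnd ℂ c ^ n * inner ℂ (G2 (f n)) (g (n + 1))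
  have ha : Summable a := .of_norm_bounded ((lp.summable_norm_mul_norm_add f g 0).mul_left _)
    fun n => norm_pow_mul_inner_le hc' n _ _ _
  have hb : Summable b := .of_norm_bounded ((lp.summable_norm_mul_norm_add f g 1).mul_left _)
    fun n => norm_pow_mul_inner_le hc' n _ _ _
  have hleft : HasSum (fun n => inner ℂ (A1 f n) (g n)) (∑' n, a n + ∑' n, b n) := by
    have hrest : HasSum (fun n => inner ℂ (A1 f n) (g n) - a n) (∑' n, b n) :=
      hb.hasSum.of_zero_of_succ (by simp [a, (hA1 f).1]) fun n => by
        simp only [a, b, (hA1 f).2, inner_add_left, inner_smul_left, map_pow]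
        ring
    simpa using ha.hasSum.add hrest
  have hright : HasSum (fun n => c * inner ℂ (S f n) (A2 g n)) (∑' n, a n + ∑' n, b n) :=
    (ha.hasSum.add hb.hasSum).of_zero_of_succ (by simp [(hS f).1]) fun n => by
      rw [(hS f).2, (hA2 g).2, inner_smul_right, inner_add_right, adjoint_inner_right,
        ← adjoint_inner_left]
      simp only [a, b, pow_succ]
      linear_combination (starRingEnd ℂ c ^ n * (inner ℂ (G2 (f n)) (g (n + 1)) +
        inner ℂ (adjoint G1 (f n)) (g n))) * hcc
  exact ((lp.hasSum_inner _ _).unique hleft).trans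
    (((lp.hasSum_inner _ _).mul_left c).unique hright).symm

end ShiftModelInner

theorem douglas_model_pseudo_qcommuting_triple_general
    {H : Type*} [NormedAddCommGroup H] [InnerProductSpace ℂ H]
    {L : Type*} [NormedAddCommGroup L] [InnerProductSpace ℂ L] [CompleteSpace L]
    (q : ℂ) (hq : ‖q‖ = 1)
    -- the defect operator and defect space of T* = (T1 T2)*
    (M : Submodule ℂ H)
    [CompleteSpace M]
    -- the fundamental operators of (T1*, T2*) on the defect space
    (G1 G2 : M →L[ℂ] M)
    -- the canonical q-commuting unitary pair (W1, W2) on L = 𝒬_{T*}, W_D = W1 W2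
    (W1 W2 WD : L →L[ℂ] L)
    (hW2uni : adjoint W2 ∘L W2 = 1 ∧ W2 ∘L adjoint W2 = 1)
    (hWD : W1 ∘L W2 = WD) (hWq : W1 ∘L W2 = q • (W2 ∘L W1))
    -- the block operators on H²(𝒟_{T*}): the shift M_z, M_{G1*+zG2} R_q, R_{q̄} M_{G2*+zG1}
    (S A1 A2 : lp (fun _ : ℕ => M) 2 →L[ℂ] lp (fun _ : ℕ => M) 2)
    (hS : ∀ f : lp (fun _ : ℕ => M) 2, (S f) 0 = 0 ∧ ∀ n : ℕ, (S f) (n + 1) = f n)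
    (hA1 : ∀ f : lp (fun _ : ℕ => M) 2,
      (A1 f) 0 = adjoint G1 (f 0) ∧
      ∀ n : ℕ, (A1 f) (n + 1) = q ^ (n + 1) • adjoint G1 (f (n + 1)) + q ^ n • G2 (f n))
    (hA2 : ∀ f : lp (fun _ : ℕ => M) 2,
      (A2 f) 0 = adjoint G2 (f 0) ∧
      ∀ n : ℕ, (A2 f) (n + 1)
        = (starRingEnd ℂ q) ^ (n + 1) • (adjoint G2 (f (n + 1)) + G1 (f n)))
    -- the direct-sum operators 𝕎1 = A1 ⊕ W1, 𝕎2 = A2 ⊕ W2, V_D = S ⊕ W_D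
    (𝕎1 𝕎2 VD : WithLp 2 (lp (fun _ : ℕ => M) 2 × L) →L[ℂ]
      WithLp 2 (lp (fun _ : ℕ => M) 2 × L))
    (h𝕎1 : ∀ (f : lp (fun _ : ℕ => M) 2) (y : L),
      WithLp.equiv 2 _ (𝕎1 ((WithLp.equiv 2 _).symm (f, y))) = (A1 f, W1 y))
    (h𝕎2 : ∀ (f : lp (fun _ : ℕ => M) 2) (y : L),
      WithLp.equiv 2 _ (𝕎2 ((WithLp.equiv 2 _).symm (f, y))) = (A2 f, W2 y))
    (hVD : ∀ (f : lp (fun _ : ℕ => M) 2) (y : L),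
      WithLp.equiv 2 _ (VD ((WithLp.equiv 2 _).symm (f, y))) = (S f, WD y)) :
    𝕎1 ∘L VD = q • (VD ∘L 𝕎1) ∧
    𝕎2 ∘L VD = (starRingEnd ℂ q) • (VD ∘L 𝕎2) ∧
    𝕎1 = (starRingEnd ℂ q) • (adjoint 𝕎2 ∘L VD) := by
  have hqq : starRingEnd ℂ q * q = 1 := by
    rw [Complex.conj_mul', hq, Complex.ofReal_one, one_pow]
  have hW1WD : W1 ∘L WD = q • (WD ∘L W1) := by
    rw [← hWD]; exact mul_mul_eq_smul_of_mul_eq_smul_left hWq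
  have hW2WD : W2 ∘L WD = starRingEnd ℂ q • (WD ∘L W2) := by
    rw [← hWD]; exact mul_mul_eq_smul_of_mul_eq_smul_right hqq hWq
  have hW1_eq : W1 = starRingEnd ℂ q • (adjoint W2 ∘L WD) := by
    rw [← hWD]; exact eq_smul_mul_mul_of_mul_eq_smul hqq hW2uni.1 hWq
  have hA1_eq : A1 = starRingEnd ℂ q • (adjoint A2 ∘L S) :=
    eq_conj_smul_adjoint_comp_of_inner
      (IsShift.inner_mulRotation_eq_mul_inner_rotationMul hq hS hA1 hA2)
  have h𝕎1 : IsProdMap 𝕎1 A1 W1 := h𝕎1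
  have h𝕎2 : IsProdMap 𝕎2 A2 W2 := h𝕎2
  have hVD : IsProdMap VD S WD := hVD
  refine ⟨(h𝕎1.comp hVD).unique ?_, (h𝕎2.comp hVD).unique ?_, h𝕎1.unique ?_⟩
  · rw [IsShift.comp_eq_smul_comp_of_isMulRotation hS hA1, hW1WD]
    exact (hVD.comp h𝕎1).smul q
  · rw [IsShift.comp_eq_smul_comp_of_isRotationMul hS hA2, hW2WD]
    exact (hVD.comp h𝕎2).smul _
  · have h := (h𝕎2.adjoint.comp hVD).smul (starRingEnd ℂ q)
    rwa [← hA1_eq, ← hW1_eq] at h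

/-- The Douglas-model pseudo `q`-commuting contractive triple.  Let `T1, T2` be
`q`-commuting contractions with `T = T1 T2`, let `(G1, G2)` be the fundamental operators of
`(T1*, T2*)` (operators on the defect space `𝒟_{T*}` satisfying the fundamental equations),
and `(W1, W2)` the canonical `q`-commuting unitary pair on `𝒬_{T*}` (with
`W1 W2 = q W2 W1 = W_D`, and `Wᵢ* ∘ (incl ∘ Q_{T*}) = (incl ∘ Q_{T*}) ∘ Tᵢ*`).  Then, on
`H²(𝒟_{T*}) ⊕ 𝒬_{T*}` (with `H²` realized as `ℓ²` of Taylor coefficients and `⊕` the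
`ℓ²`-direct sum), the operators `𝕎1 = M_{G1*+zG2} R_q ⊕ W1`, `𝕎2 = R_{q̄} M_{G2*+zG1} ⊕ W2`
and `V_D = M_z ⊕ W_D` satisfy `𝕎1 V_D = q V_D 𝕎1`, `𝕎2 V_D = q̄ V_D 𝕎2`, and
`𝕎1 = q̄ 𝕎2* V_D`. -/
theorem douglas_model_pseudo_qcommuting_triple
    {H : Type*} [NormedAddCommGroup H] [InnerProductSpace ℂ H] [CompleteSpace H]
    {L : Type*} [NormedAddCommGroup L] [InnerProductSpace ℂ L] [CompleteSpace L]
    (q : ℂ) (hq : ‖q‖ = 1)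
    (T1 T2 : H →L[ℂ] H) (hT1 : ‖T1‖ ≤ 1) (hT2 : ‖T2‖ ≤ 1)
    (hcomm : T1 * T2 = q • (T2 * T1))
    -- the defect operator and defect space of T* = (T1 T2)*
    (Dst : H →L[ℂ] H) (hDst : Dst.IsPositive)
    (hDstsq : Dst * Dst = 1 - (T1 * T2) * adjoint (T1 * T2))
    (M : Submodule ℂ H) (hM : M = (LinearMap.range (Dst : H →ₗ[ℂ] H)).topologicalClosure)
    [CompleteSpace M]
    -- the fundamental operators of (T1*, T2*) on the defect space
    (G1 G2 : M →L[ℂ] M)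
    (hG1 : ∀ (h : H) (x : M), (x : H) = Dst h →
      Dst ((G1 x : M) : H) = (adjoint T1 - T2 * adjoint (T1 * T2)) h)
    (hG2 : ∀ (h : H) (x : M), (x : H) = Dst h →
      Dst ((G2 x : M) : H) = (adjoint T2 - q • (T1 * adjoint (T1 * T2))) h)
    -- the canonical q-commuting unitary pair (W1, W2) on L = 𝒬_{T*}, W_D = W1 W2
    (W1 W2 WD : L →L[ℂ] L)
    (hW1uni : adjoint W1 ∘L W1 = 1 ∧ W1 ∘L adjoint W1 = 1)
    (hW2uni : adjoint W2 ∘L W2 = 1 ∧ W2 ∘L adjoint W2 = 1)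
    (hWD : W1 ∘L W2 = WD) (hWq : W1 ∘L W2 = q • (W2 ∘L W1))
    (jQ : H →L[ℂ] L)
    (hj1 : ∀ h : H, adjoint W1 (jQ h) = jQ (adjoint T1 h))
    (hj2 : ∀ h : H, adjoint W2 (jQ h) = jQ (adjoint T2 h))
    (hjD : ∀ h : H, adjoint WD (jQ h) = jQ (adjoint (T1 * T2) h))
    -- the block operators on H²(𝒟_{T*}): the shift M_z, M_{G1*+zG2} R_q, R_{q̄} M_{G2*+zG1}
    (S A1 A2 : lp (fun _ : ℕ => M) 2 →L[ℂ] lp (fun _ : ℕ => M) 2)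
    (hS : ∀ f : lp (fun _ : ℕ => M) 2, (S f) 0 = 0 ∧ ∀ n : ℕ, (S f) (n + 1) = f n)
    (hA1 : ∀ f : lp (fun _ : ℕ => M) 2,
      (A1 f) 0 = adjoint G1 (f 0) ∧
      ∀ n : ℕ, (A1 f) (n + 1) = q ^ (n + 1) • adjoint G1 (f (n + 1)) + q ^ n • G2 (f n))
    (hA2 : ∀ f : lp (fun _ : ℕ => M) 2,
      (A2 f) 0 = adjoint G2 (f 0) ∧
      ∀ n : ℕ, (A2 f) (n + 1)
        = (starRingEnd ℂ q) ^ (n + 1) • (adjoint G2 (f (n + 1)) + G1 (f n)))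
    -- the direct-sum operators 𝕎1 = A1 ⊕ W1, 𝕎2 = A2 ⊕ W2, V_D = S ⊕ W_D
    (𝕎1 𝕎2 VD : WithLp 2 (lp (fun _ : ℕ => M) 2 × L) →L[ℂ]
      WithLp 2 (lp (fun _ : ℕ => M) 2 × L))
    (h𝕎1 : ∀ (f : lp (fun _ : ℕ => M) 2) (y : L),
      WithLp.equiv 2 _ (𝕎1 ((WithLp.equiv 2 _).symm (f, y))) = (A1 f, W1 y))
    (h𝕎2 : ∀ (f : lp (fun _ : ℕ => M) 2) (y : L),
      WithLp.equiv 2 _ (𝕎2 ((WithLp.equiv 2 _).symm (f, y))) = (A2 f, W2 y))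
    (hVD : ∀ (f : lp (fun _ : ℕ => M) 2) (y : L),
      WithLp.equiv 2 _ (VD ((WithLp.equiv 2 _).symm (f, y))) = (S f, WD y)) :
    𝕎1 ∘L VD = q • (VD ∘L 𝕎1) ∧
    𝕎2 ∘L VD = (starRingEnd ℂ q) • (VD ∘L 𝕎2) ∧
    𝕎1 = (starRingEnd ℂ q) • (adjoint 𝕎2 ∘L VD) :=
  douglas_model_pseudo_qcommuting_triple_general q hq M G1 G2 W1 W2 WD hW2uni hWD hWq S A1 A2 hS hA1
    hA2 𝕎1 𝕎2 VD h𝕎1 h𝕎2 hVD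
end

section
/- If 𝕎 is a bounded operator on H²(E) ⊕ L, written in block form [[A, B],[C, D]] with respect to this decomposition, that satisfies 𝕎 (M_z ⊕ W) = q (M_z ⊕ W) 𝕎 for a unitary W on L and unimodular q, then B = 0 (the block mapping L into H²(E) vanishes). -/
/-!
Evaluating `𝕎 (M_z ⊕ W) = q (M_z ⊕ W) 𝕎` on `(0, y)` gives `B W = q M_z B` for the block `B`.
As `W` is surjective, every `B y` lies in the range of `M_z`, and its `(n+1)`-st Taylor
coefficient is `q` times the `n`-th coefficient of `B (W⁻¹ y)`; the zeroth coefficient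
vanishes, hence by induction all do.
-/

open ContinuousLinearMap

section Block

variable {𝕜 H K : Type*} [NormedField 𝕜]
  [NormedAddCommGroup H] [NormedSpace 𝕜 H] [NormedAddCommGroup K] [NormedSpace 𝕜 K]

/-- The `(1,2)` entry of the block matrix of an operator on `H ⊕₂ K`, mapping `K` into `H`. -/
def block₁₂ (T : WithLp 2 (H × K) →L[𝕜] WithLp 2 (H × K)) (y : K) : H :=
  (WithLp.equiv 2 _ (T ((WithLp.equiv 2 _).symm (0, y)))).1

theorem block₁₂_apply_eq_smul_of_comp_eq_smul_comp
    {T V : WithLp 2 (H × K) →L[𝕜] WithLp 2 (H × K)} {S : H →L[𝕜] H} {W : K → K} {q : 𝕜}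
    (hV : ∀ x y, WithLp.equiv 2 _ (V ((WithLp.equiv 2 _).symm (x, y))) = (S x, W y))
    (hT : T ∘L V = q • (V ∘L T)) (y : K) :
    block₁₂ T (W y) = q • S (block₁₂ T y) := by
  set e := WithLp.equiv 2 (H × K)
  have hV_inr : V (e.symm (0, y)) = e.symm (0, W y) := by
    rw [← e.symm_apply_apply (V _), hV, map_zero]
  have hV_T : e (V (T (e.symm (0, y)))) = (S (block₁₂ T y), W (e (T (e.symm (0, y)))).2) := by
    rw [← hV]; rfl
  have h := congrArg (fun x => (e x).1) (congrArg (· (e.symm (0, y))) hT)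
  simp only [comp_apply, smul_apply, hV_inr] at h
  exact h.trans (congrArg (q • ·.1) hV_T)

end Block

theorem lp.eq_zero_of_comp_surjective_eq_smul_shift {𝕜 E X : Type*} [NormedField 𝕜]
    [NormedAddCommGroup E] [NormedSpace 𝕜 E]
    {S : lp (fun _ : ℕ => E) 2 → lp (fun _ : ℕ => E) 2}
    (hS : ∀ f, S f 0 = 0 ∧ ∀ n, S f (n + 1) = f n)
    {B : X → lp (fun _ : ℕ => E) 2} {W : X → X} (hW : Function.Surjective W) {c : 𝕜}
    (hB : ∀ x, B (W x) = c • S (B x)) (x : X) : B x = 0 := by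
  suffices ∀ n x, B x n = 0 from lp.ext (funext fun n => this n x)
  intro n
  induction n with
  | zero =>
    intro x
    obtain ⟨x', rfl⟩ := hW x
    rw [hB, lp.coeFn_smul, Pi.smul_apply, (hS _).1, smul_zero]
  | succ n ih =>
    intro x
    obtain ⟨x', rfl⟩ := hW x
    rw [hB, lp.coeFn_smul, Pi.smul_apply, (hS _).2, ih, smul_zero]

theorem block_vanishes_of_qintertwining_general
    {E : Type*} [NormedAddCommGroup E] [InnerProductSpace ℂ E]
    {L : Type*} [NormedAddCommGroup L] [InnerProductSpace ℂ L] [CompleteSpace L]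
    (q : ℂ)
    (Mz : lp (fun _ : ℕ => E) 2 →L[ℂ] lp (fun _ : ℕ => E) 2)
    (hMz : ∀ f : lp (fun _ : ℕ => E) 2, (Mz f) 0 = 0 ∧ ∀ n : ℕ, (Mz f) (n + 1) = f n)
    (W : L →L[ℂ] L)
    (hWuni : adjoint W ∘L W = 1 ∧ W ∘L adjoint W = 1)
    -- the direct-sum operator V = M_z ⊕ W
    (V : WithLp 2 (lp (fun _ : ℕ => E) 2 × L) →L[ℂ] WithLp 2 (lp (fun _ : ℕ => E) 2 × L))
    (hV : ∀ (f : lp (fun _ : ℕ => E) 2) (y : L),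
      WithLp.equiv 2 _ (V ((WithLp.equiv 2 _).symm (f, y))) = (Mz f, W y))
    (𝕎 : WithLp 2 (lp (fun _ : ℕ => E) 2 × L) →L[ℂ] WithLp 2 (lp (fun _ : ℕ => E) 2 × L))
    (h𝕎 : 𝕎 ∘L V = q • (V ∘L 𝕎)) :
    ∀ y : L, (WithLp.equiv 2 _ (𝕎 ((WithLp.equiv 2 _).symm (0, y)))).1 = 0 := by
  have hW_surj : Function.Surjective W := fun y =>
    ⟨adjoint W y, by simpa using congr($(hWuni.2) y)⟩
  exact lp.eq_zero_of_comp_surjective_eq_smul_shift hMz hW_surj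
    (block₁₂_apply_eq_smul_of_comp_eq_smul_comp hV h𝕎)

/-- If `𝕎` is a bounded operator on `H²(E) ⊕ L` (with `H²(E)` realized as `ℓ²(ℕ, E)` of
Taylor coefficients and `⊕` the `ℓ²`-direct sum), written in `2 × 2` block form with
respect to this decomposition, satisfying `𝕎 (M_z ⊕ W) = q (M_z ⊕ W) 𝕎` for a unitary `W`
on `L` and a unimodular `q`, then its `(1,2)` block (mapping `L` into `H²(E)`) vanishes. -/
theorem block_vanishes_of_qintertwining
    {E : Type*} [NormedAddCommGroup E] [InnerProductSpace ℂ E] [CompleteSpace E]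
    {L : Type*} [NormedAddCommGroup L] [InnerProductSpace ℂ L] [CompleteSpace L]
    (q : ℂ) (hq : ‖q‖ = 1)
    (Mz : lp (fun _ : ℕ => E) 2 →L[ℂ] lp (fun _ : ℕ => E) 2)
    (hMz : ∀ f : lp (fun _ : ℕ => E) 2, (Mz f) 0 = 0 ∧ ∀ n : ℕ, (Mz f) (n + 1) = f n)
    (W : L →L[ℂ] L)
    (hWuni : adjoint W ∘L W = 1 ∧ W ∘L adjoint W = 1)
    -- the direct-sum operator V = M_z ⊕ W
    (V : WithLp 2 (lp (fun _ : ℕ => E) 2 × L) →L[ℂ] WithLp 2 (lp (fun _ : ℕ => E) 2 × L))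
    (hV : ∀ (f : lp (fun _ : ℕ => E) 2) (y : L),
      WithLp.equiv 2 _ (V ((WithLp.equiv 2 _).symm (f, y))) = (Mz f, W y))
    (𝕎 : WithLp 2 (lp (fun _ : ℕ => E) 2 × L) →L[ℂ] WithLp 2 (lp (fun _ : ℕ => E) 2 × L))
    (h𝕎 : 𝕎 ∘L V = q • (V ∘L 𝕎)) :
    ∀ y : L, (WithLp.equiv 2 _ (𝕎 ((WithLp.equiv 2 _).symm (0, y)))).1 = 0 :=
  block_vanishes_of_qintertwining_general q Mz hMz W hWuni V hV 𝕎 h𝕎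
end
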